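/- arXiv:1711.07032 — 5 statements merged into one kernel-verified Lean document; each statement's English description precedes it below -/
import Mathlib

section
/- With D(λ), B(λ), C(λ) defined from K⁻¹Φ(b,λ) as above and φ₁, φ₂ the fundamental solutions of the distributional Sturm–Liouville equation, the identity 4 C(λ) D′(λ) = −∫ₐᵇ (2C(λ)φ₁(s,λ) + B(λ)φ₂(s,λ))² ds − (4 − D(λ)²) ∫ₐᵇ φ₂(s,λ)² ds holds. Consequently, if |D(λ)| < 2 then D′(λ) ≠ 0. -/
open MeasureTheory intervalIntegral Set

/-- Auxiliary: a function continuous on `Icc a b` times an integrable `r` is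
interval integrable on `[a, b]`. -/
lemma aux_ii (a b : ℝ) (hab : a < b) (r : ℝ → ℝ)
    (hr : IntegrableOn r (Set.Ioo a b)) (g : ℝ → ℝ)
    (hg : ContinuousOn g (Set.Icc a b)) :
    IntervalIntegrable (fun x => g x * r x) volume a b := by
  rw [intervalIntegrable_iff_integrableOn_Ioc_of_le hab.le,
    integrableOn_Ioc_iff_integrableOn_Ioo]
  obtain ⟨M, hM⟩ := isCompact_Icc.exists_bound_of_continuousOn hg
  exact hr.bdd_mul ((hg.mono Ioo_subset_Icc_self).aestronglyMeasurable measurableSet_Ioo)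
    ((ae_restrict_iff' measurableSet_Ioo).2 (ae_of_all _ fun x hx =>
      hM x (Ioo_subset_Icc_self hx)))

/-- With `D(λ), B(λ), C(λ)` defined from `K⁻¹Φ(b,λ) = [[D₂, C],[A, D₁]]` (so
`D = D₁ + D₂`, `B = D₁ − D₂`, `D₁D₂ − AC = 1`), and with the fundamental solutions
`φ₁, φ₂` and the variation-of-parameters formula
`D′(λ) = ∫ₐᵇ (A φ₂² − B φ₁φ₂ − C φ₁²) r`, one has the identity
`4 C D′(λ) = −∫ₐᵇ (2Cφ₁ + Bφ₂)² r − (4 − D²) ∫ₐᵇ φ₂² r`;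
consequently `|D(λ)| < 2` implies `D′(λ) ≠ 0`. -/
theorem stmt7 (a b : ℝ) (hab : a < b) (r : ℝ → ℝ)
    (hr : IntegrableOn r (Set.Ioo a b))
    (hrpos : ∀ᵐ x ∂(volume.restrict (Set.Ioo a b)), 0 < r x)
    (phi1 phi2 : ℝ → ℝ)
    (h1c : ContinuousOn phi1 (Set.Icc a b)) (h2c : ContinuousOn phi2 (Set.Icc a b))
    (hnt : ∃ x ∈ Set.Icc a b, phi2 x ≠ 0)
    (A B C D D₁ D₂ Dp : ℝ)
    (hdet : D₁ * D₂ - A * C = 1) (hD : D = D₁ + D₂) (hB : B = D₁ - D₂)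
    (hDp : Dp = ∫ x in a..b,
      (A * phi2 x ^ 2 - B * phi1 x * phi2 x - C * phi1 x ^ 2) * r x) :
    (4 * C * Dp = -(∫ x in a..b, (2 * C * phi1 x + B * phi2 x) ^ 2 * r x)
        - (4 - D ^ 2) * (∫ x in a..b, phi2 x ^ 2 * r x)) ∧
      (|D| < 2 → Dp ≠ 0) := by
  have hDB : D ^ 2 - B ^ 2 = 4 + 4 * (A * C) := by
    rw [hD, hB]; nlinarith [hdet]
  -- integrability of the pieces
  have hsq : IntervalIntegrable (fun x => (2 * C * phi1 x + B * phi2 x) ^ 2 * r x)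
      volume a b :=
    aux_ii a b hab r hr _ (((continuousOn_const.mul h1c).add
      (continuousOn_const.mul h2c)).pow 2)
  have hphi2 : IntervalIntegrable (fun x => phi2 x ^ 2 * r x) volume a b :=
    aux_ii a b hab r hr _ (h2c.pow 2)
  -- the identity
  have hident : 4 * C * Dp = -(∫ x in a..b, (2 * C * phi1 x + B * phi2 x) ^ 2 * r x)
      - (4 - D ^ 2) * (∫ x in a..b, phi2 x ^ 2 * r x) := by
    have split : (∫ x in a..b, (-((2 * C * phi1 x + B * phi2 x) ^ 2 * r x)
          - (4 - D ^ 2) * (phi2 x ^ 2 * r x)))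
        = -(∫ x in a..b, (2 * C * phi1 x + B * phi2 x) ^ 2 * r x)
          - (4 - D ^ 2) * (∫ x in a..b, phi2 x ^ 2 * r x) := by
      have hsqneg : IntervalIntegrable
          (fun x => -((2 * C * phi1 x + B * phi2 x) ^ 2 * r x)) volume a b := hsq.neg
      rw [intervalIntegral.integral_sub hsqneg (hphi2.const_mul _),
        intervalIntegral.integral_neg, intervalIntegral.integral_const_mul]
    rw [hDp, ← intervalIntegral.integral_const_mul, ← split]
    refine intervalIntegral.integral_congr fun x _ => ?_
    linear_combination (-(phi2 x ^ 2 * r x)) * hDB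
  refine ⟨hident, fun hDlt => ?_⟩
  -- C ≠ 0
  have hD2 : D ^ 2 < 4 := by nlinarith [abs_nonneg D, sq_abs D, abs_lt.1 hDlt]
  have hAC : A * C < 0 := by nlinarith [sq_nonneg B]
  have hC : C ≠ 0 := fun h => by simp [h] at hAC
  -- positivity of ∫ φ₂² r
  -- find a point in Ioo where φ₂ ≠ 0
  obtain ⟨x₀, hx₀, hx₀ne⟩ := hnt
  have hclos : x₀ ∈ closure (Set.Ioo a b) := by
    rw [closure_Ioo hab.ne]; exact hx₀
  have hne : (nhdsWithin x₀ (Set.Ioo a b)).NeBot :=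
    mem_closure_iff_nhdsWithin_neBot.1 hclos
  have hcw : ContinuousWithinAt phi2 (Set.Ioo a b) x₀ :=
    (h2c x₀ hx₀).mono Ioo_subset_Icc_self
  have hev : ∀ᶠ y in nhdsWithin x₀ (Set.Ioo a b), phi2 y ≠ 0 :=
    hcw (isOpen_ne.mem_nhds hx₀ne)
  obtain ⟨y₀, hy₀ne, hy₀⟩ := (hev.and self_mem_nhdsWithin).exists
  -- the open set where φ₂ ≠ 0
  set U : Set ℝ := Set.Ioo a b ∩ phi2 ⁻¹' {0}ᶜ with hU
  have hUopen : IsOpen U :=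
    ContinuousOn.isOpen_inter_preimage (h2c.mono Ioo_subset_Icc_self) isOpen_Ioo
      isOpen_compl_singleton
  have hUne : U.Nonempty := ⟨y₀, hy₀, hy₀ne⟩
  have hUpos : 0 < volume U := hUopen.measure_pos volume hUne
  -- positivity of the set integral
  set f : ℝ → ℝ := fun x => phi2 x ^ 2 * r x with hf
  have hfint : IntegrableOn f (Set.Ioo a b) := by
    have := (intervalIntegrable_iff_integrableOn_Ioc_of_le hab.le).1 hphi2
    rwa [integrableOn_Ioc_iff_integrableOn_Ioo] at this
  have hfnn : 0 ≤ᶠ[ae (volume.restrict (Set.Ioo a b))] f :=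
    hrpos.mono fun x hx => mul_nonneg (sq_nonneg _) hx.le
  have hsupp : 0 < volume (Function.support f ∩ Set.Ioo a b) := by
    set V : Set ℝ := {x | 0 < r x} with hV
    have hnull : volume.restrict (Set.Ioo a b) Vᶜ = 0 := ae_iff.1 hrpos
    have hsub : U ∩ V ⊆ Function.support f ∩ Set.Ioo a b := by
      rintro x ⟨⟨hx1, hx2⟩, hx3⟩
      refine ⟨?_, hx1⟩
      have hp2 : 0 < phi2 x ^ 2 := (sq_nonneg _).lt_of_ne (Ne.symm (pow_ne_zero 2 hx2))
      exact ne_of_gt (mul_pos hp2 hx3)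
    have hUV : 0 < volume (U ∩ V) := by
      have h1 : volume.restrict (Set.Ioo a b) U ≤
          volume.restrict (Set.Ioo a b) (U ∩ V) +
          volume.restrict (Set.Ioo a b) Vᶜ := by
        refine (measure_mono ?_).trans (measure_union_le _ _)
        intro x hx
        by_cases hrx : x ∈ V
        · exact Or.inl ⟨hx, hrx⟩
        · exact Or.inr hrx
      rw [hnull, add_zero] at h1
      have h2 : 0 < volume.restrict (Set.Ioo a b) U := by
        rw [Measure.restrict_apply' measurableSet_Ioo,
          Set.inter_eq_left.2 (Set.inter_subset_left : U ⊆ Set.Ioo a b)]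
        exact hUpos
      have h3 := h2.trans_le h1
      calc (0 : ENNReal) < volume.restrict (Set.Ioo a b) (U ∩ V) := h3
        _ ≤ volume (U ∩ V) := Measure.restrict_le_self _
    exact hUV.trans_le (measure_mono hsub)
  have hpos : 0 < ∫ x in Set.Ioo a b, f x :=
    (setIntegral_pos_iff_support_of_nonneg_ae hfnn hfint).2 hsupp
  have hpos' : 0 < ∫ x in a..b, phi2 x ^ 2 * r x := by
    rw [intervalIntegral.integral_of_le hab.le, integral_Ioc_eq_integral_Ioo]
    exact hpos
  -- nonnegativity of the square integral
  have hsqnn : 0 ≤ ∫ x in a..b, (2 * C * phi1 x + B * phi2 x) ^ 2 * r x := by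
    rw [intervalIntegral.integral_of_le hab.le, integral_Ioc_eq_integral_Ioo]
    refine setIntegral_nonneg_ae measurableSet_Ioo ?_
    filter_upwards [(ae_restrict_iff' measurableSet_Ioo).1 hrpos] with x hx hmem
    exact mul_nonneg (sq_nonneg _) (hx hmem).le
  -- conclude
  intro hDp0
  rw [hDp0, mul_zero] at hident
  nlinarith [hident, hsqnn, hpos', hD2]
end

section
/- Let θ(t,λ) be the Prüfer angle as above with θ(a,λ) = α ∈ [0,π). Then θ(b,λ) → ∞ as λ → +∞. -/
open MeasureTheory intervalIntegral Set Real Filter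

/-!
Put `μ = √λ` and `Φ_μ y = ∫₀ʸ μ / (cos² t + μ² sin² t) dt`, the continuous branch of
`arctan (μ tan y)` through `0`; the paper's modified angle is `φ = Φ_μ ∘ θ`. The integrand has
period `π` and integral `π` over a period, so `Φ_μ (y + π) = Φ_μ y + π` and `Φ_μ y ≤ y + π`.
Along a solution, `φ' = Φ_μ'(θ) θ'` is a quadratic form in `(cos θ, μ sin θ)` divided by
`cos² θ + μ² sin² θ`, whence `φ' ≥ μ min (1/p, r) - |s| - |q| / μ`. As `θ` is only absolutely
continuous, the chain rule is applied through the fundamental theorem of calculus for absolutely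
continuous functions. Integrating, `θ(b) ≥ φ(b) - π ≥ μ ∫ min (1/p, r) - ∫ |q| - ∫ |s| - π`,
and `∫ min (1/p, r) > 0`.
-/

theorem LipschitzWith.comp_absolutelyContinuousOnInterval {X Y : Type*} [PseudoMetricSpace X]
    [PseudoMetricSpace Y] {g : X → Y} {K : NNReal} {f : ℝ → X} {a b : ℝ}
    (hg : LipschitzWith K g) (hf : AbsolutelyContinuousOnInterval f a b) :
    AbsolutelyContinuousOnInterval (g ∘ f) a b := by
  unfold AbsolutelyContinuousOnInterval at hf ⊢
  have hKf := hf.const_mul (K : ℝ)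
  rw [mul_zero] at hKf
  refine squeeze_zero (fun _ => Finset.sum_nonneg fun _ _ => dist_nonneg) (fun E => ?_) hKf
  rw [Finset.mul_sum]
  exact Finset.sum_le_sum fun i _ => hg.dist_le_mul _ _

theorem integral_le_sub_comp_integral {Φ F L : ℝ → ℝ} {K : NNReal} {a b c : ℝ} (hab : a ≤ b)
    (hΦ : Differentiable ℝ Φ) (hΦK : LipschitzWith K Φ) (hF : IntervalIntegrable F volume a b)
    (hL : IntervalIntegrable L volume a b)
    (hLF : ∀ x ∈ Icc a b, L x ≤ deriv Φ (c + ∫ t in a..x, F t) * F x) :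
    ∫ x in a..b, L x ≤ Φ (c + ∫ t in a..b, F t) - Φ c := by
  set ψ : ℝ → ℝ := fun x => c + ∫ t in a..x, F t
  have hψ : AbsolutelyContinuousOnInterval (Φ ∘ ψ) a b :=
    (hΦK.comp (isometry_add_left c).lipschitz).comp_absolutelyContinuousOnInterval
      (hF.absolutelyContinuousOnInterval_intervalIntegral left_mem_uIcc)
  have hderiv : L ≤ᵐ[volume.restrict (Icc a b)] deriv (Φ ∘ ψ) := by
    rw [EventuallyLE, ae_restrict_iff' measurableSet_Icc]
    filter_upwards [hF.ae_hasDerivAt_integral] with x hx hxab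
    have hψx : HasDerivAt ψ (F x) x :=
      (hx (Icc_subset_uIcc hxab) a left_mem_uIcc).const_add c
    rw [((hΦ (ψ x)).hasDerivAt.comp x hψx).deriv]
    exact hLF x hxab
  simpa [ψ, hψ.integral_deriv_eq_sub] using
    integral_mono_ae_restrict hab hL hψ.intervalIntegrable_deriv hderiv

theorem MeasureTheory.integral_pos_of_ae_pos {X : Type*} [MeasurableSpace X] {μ : Measure X}
    [NeZero μ] {f : X → ℝ} (hf : Integrable f μ) (hpos : ∀ᵐ x ∂μ, 0 < f x) :
    0 < ∫ x, f x ∂μ := by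
  have hnonneg : 0 ≤ᵐ[μ] f := hpos.mono fun _ hx => hx.le
  refine (integral_nonneg_of_ae hnonneg).lt_of_ne' fun hzero => ?_
  obtain ⟨x, hx, hx0⟩ := (hpos.and ((integral_eq_zero_iff_of_nonneg_ae hnonneg hf).1 hzero)).exists
  exact hx.ne' hx0

namespace Pruefer

noncomputable def modifiedAngleDeriv (μ y : ℝ) : ℝ :=
  μ / (cos y ^ 2 + μ ^ 2 * sin y ^ 2)

noncomputable def modifiedAngle (μ y : ℝ) : ℝ :=
  ∫ t in (0 : ℝ)..y, modifiedAngleDeriv μ t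

variable {μ : ℝ}

lemma cos_sq_add_mul_sin_sq_pos (hμ : 0 < μ) (y : ℝ) : 0 < cos y ^ 2 + μ ^ 2 * sin y ^ 2 := by
  rcases eq_or_ne (sin y) 0 with h | h
  · nlinarith [sin_sq_add_cos_sq y]
  · positivity

lemma continuous_modifiedAngleDeriv (hμ : 0 < μ) : Continuous (modifiedAngleDeriv μ) :=
  continuous_const.div (by fun_prop) fun y => (cos_sq_add_mul_sin_sq_pos hμ y).ne'

lemma modifiedAngleDeriv_nonneg (hμ : 0 < μ) (y : ℝ) : 0 ≤ modifiedAngleDeriv μ y :=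
  div_nonneg hμ.le (cos_sq_add_mul_sin_sq_pos hμ y).le

lemma modifiedAngleDeriv_le (hμ : 0 < μ) (y : ℝ) : modifiedAngleDeriv μ y ≤ μ + μ⁻¹ := by
  rw [modifiedAngleDeriv, div_le_iff₀ (cos_sq_add_mul_sin_sq_pos hμ y)]
  have h : μ * (μ + μ⁻¹) = μ ^ 2 + 1 := by field_simp
  nlinarith [sin_sq_add_cos_sq y, sq_nonneg (sin y), sq_nonneg (μ * sin y), mul_pos hμ hμ]

lemma modifiedAngleDeriv_periodic (μ : ℝ) : Function.Periodic (modifiedAngleDeriv μ) π := by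
  intro y
  simp [modifiedAngleDeriv, sin_add_pi, cos_add_pi]

lemma hasDerivAt_modifiedAngle (hμ : 0 < μ) (y : ℝ) :
    HasDerivAt (modifiedAngle μ) (modifiedAngleDeriv μ y) y :=
  ((continuous_modifiedAngleDeriv hμ).integral_hasStrictDerivAt 0 y).hasDerivAt

lemma lipschitzWith_modifiedAngle (hμ : 0 < μ) :
    LipschitzWith (μ + μ⁻¹).toNNReal (modifiedAngle μ) :=
  lipschitzWith_of_nnnorm_deriv_le (fun y => (hasDerivAt_modifiedAngle hμ y).differentiableAt)
    fun y => by
      rw [Real.le_toNNReal_iff_coe_le (by positivity), coe_nnnorm,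
        (hasDerivAt_modifiedAngle hμ y).deriv, norm_eq_abs,
        abs_of_nonneg (modifiedAngleDeriv_nonneg hμ y)]
      exact modifiedAngleDeriv_le hμ y

lemma monotone_modifiedAngle (hμ : 0 < μ) : Monotone (modifiedAngle μ) :=
  monotone_of_hasDerivAt_nonneg (hasDerivAt_modifiedAngle hμ) (modifiedAngleDeriv_nonneg hμ)

lemma modifiedAngle_nonneg (hμ : 0 < μ) {y : ℝ} (hy : 0 ≤ y) : 0 ≤ modifiedAngle μ y := by
  simpa [modifiedAngle] using monotone_modifiedAngle hμ hy

lemma hasDerivAt_arctan_mul_tan {y : ℝ} (hy : cos y ≠ 0) :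
    HasDerivAt (fun y => arctan (μ * tan y)) (modifiedAngleDeriv μ y) y := by
  convert (hasDerivAt_tan hy).const_mul μ |>.arctan using 1
  rw [modifiedAngleDeriv, tan_eq_sin_div_cos]
  field_simp

lemma integral_modifiedAngleDeriv_period (hμ : 0 < μ) :
    ∫ t in (0 : ℝ)..π, modifiedAngleDeriv μ t = π := by
  have hper := (modifiedAngleDeriv_periodic μ).intervalIntegral_add_eq 0 (-(π / 2))
  rw [zero_add, show -(π / 2) + π = π / 2 by ring] at hper
  rw [hper, integral_eq_sub_of_hasDerivAt_of_tendsto (f := fun y => arctan (μ * tan y))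
    (by linarith [pi_pos]) (fun y hy => hasDerivAt_arctan_mul_tan (cos_pos_of_mem_Ioo hy).ne')
    ((continuous_modifiedAngleDeriv hμ).intervalIntegrable _ _)
    ((tendsto_arctan_atBot.mono_right nhdsWithin_le_nhds).comp
      (tendsto_tan_neg_pi_div_two.const_mul_atBot hμ))
    ((tendsto_arctan_atTop.mono_right nhdsWithin_le_nhds).comp
      (tendsto_tan_pi_div_two.const_mul_atTop hμ))]
  ring

lemma modifiedAngle_add_pi (hμ : 0 < μ) (y : ℝ) :
    modifiedAngle μ (y + π) = modifiedAngle μ y + π := by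
  rw [modifiedAngle, (modifiedAngleDeriv_periodic μ).intervalIntegral_add_eq_add 0 y
    ((continuous_modifiedAngleDeriv hμ).intervalIntegrable), zero_add,
    integral_modifiedAngleDeriv_period hμ, modifiedAngle]

lemma modifiedAngle_le_add_pi (hμ : 0 < μ) (y : ℝ) : modifiedAngle μ y ≤ y + π := by
  have hper : Function.Periodic (fun y => modifiedAngle μ y - y) π := fun y => by
    simp only [modifiedAngle_add_pi hμ]
    ring
  obtain ⟨z, hz, hyz⟩ := hper.exists_mem_Ico₀ pi_pos y
  have hzπ : modifiedAngle μ z ≤ π := by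
    simpa [modifiedAngle, integral_modifiedAngleDeriv_period hμ] using
      monotone_modifiedAngle hμ hz.2.le
  linarith [hz.1, show modifiedAngle μ y - y = modifiedAngle μ z - z from hyz]

lemma mul_min_sub_le_modifiedAngleDeriv_mul (hμ : 0 < μ) (P R S Q y : ℝ) :
    μ * min P R - |S| - |Q| / μ
      ≤ modifiedAngleDeriv μ y *
          (P * cos y ^ 2 - S * sin (2 * y) + (μ ^ 2 * R - Q) * sin y ^ 2) := by
  have hD := cos_sq_add_mul_sin_sq_pos hμ y
  rw [modifiedAngleDeriv, div_mul_eq_mul_div, le_div_iff₀ hD, sin_two_mul]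
  set c := cos y
  set s := sin y
  have hmin : min P R * (c ^ 2 + μ ^ 2 * s ^ 2) ≤ P * c ^ 2 + μ ^ 2 * R * s ^ 2 := by
    nlinarith [mul_nonneg (sub_nonneg.2 (min_le_left P R)) (sq_nonneg c),
      mul_nonneg (sub_nonneg.2 (min_le_right P R)) (sq_nonneg (μ * s))]
  -- `(|S| - S) (c + μ s)² + (|S| + S) (c - μ s)² = 2 |S| (c² + μ² s²) - 4 μ S s c`
  have hS : 2 * μ * S * s * c ≤ |S| * (c ^ 2 + μ ^ 2 * s ^ 2) := by
    nlinarith [mul_nonneg (sub_nonneg.2 (le_abs_self S)) (sq_nonneg (c + μ * s)),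
      mul_nonneg (neg_le_iff_add_nonneg.1 (neg_abs_le S)) (sq_nonneg (c - μ * s))]
  have hQ : μ * Q * s ^ 2 ≤ |Q| / μ * (c ^ 2 + μ ^ 2 * s ^ 2) := by
    rw [div_mul_eq_mul_div, le_div_iff₀ hμ]
    nlinarith [le_abs_self Q, abs_nonneg Q, sq_nonneg c, sq_nonneg (μ * s)]
  nlinarith [mul_le_mul_of_nonneg_left hmin hμ.le]

noncomputable def rhs (p q r s : ℝ → ℝ) (lam t y : ℝ) : ℝ :=
  1 / p t * cos y ^ 2 - s t * sin (2 * y) + (lam * r t - q t) * sin y ^ 2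

variable {a b lam : ℝ} {p q r s θ : ℝ → ℝ}

lemma abs_rhs_le (t y : ℝ) :
    |rhs p q r s lam t y| ≤ |1 / p t| + |s t| + |lam * r t - q t| := by
  have hcos : |1 / p t * cos y ^ 2| ≤ |1 / p t| := by
    rw [abs_mul]
    exact mul_le_of_le_one_right (abs_nonneg _) (by simpa using cos_sq_le_one y)
  have hsin2 : |s t * sin (2 * y)| ≤ |s t| := by
    rw [abs_mul]
    exact mul_le_of_le_one_right (abs_nonneg _) (abs_sin_le_one _)
  have hsin : |(lam * r t - q t) * sin y ^ 2| ≤ |lam * r t - q t| := by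
    rw [abs_mul]
    exact mul_le_of_le_one_right (abs_nonneg _) (by simpa using sin_sq_le_one y)
  unfold rhs
  linarith [abs_add_le (1 / p t * cos y ^ 2 - s t * sin (2 * y)) ((lam * r t - q t) * sin y ^ 2),
    abs_sub (1 / p t * cos y ^ 2) (s t * sin (2 * y))]

lemma intervalIntegrable_rhs (hab : a ≤ b) (hp : IntervalIntegrable (fun t => 1 / p t) volume a b)
    (hq : IntervalIntegrable q volume a b) (hr : IntervalIntegrable r volume a b)
    (hs : IntervalIntegrable s volume a b) (hθ : ContinuousOn θ (Icc a b)) :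
    IntervalIntegrable (fun t => rhs p q r s lam t (θ t)) volume a b := by
  have hθm : AEStronglyMeasurable θ (volume.restrict (uIoc a b)) := by
    rw [uIoc_of_le hab]
    exact (hθ.mono Ioc_subset_Icc_self).aestronglyMeasurable measurableSet_Ioc
  refine ((hp.abs.add hs.abs).add ((hr.const_mul lam).sub hq).abs).mono_fun' ?_
    (ae_of_all _ fun t => abs_rhs_le t (θ t))
  unfold rhs
  have := hp.def'.aestronglyMeasurable
  have := hq.def'.aestronglyMeasurable
  have := hr.def'.aestronglyMeasurable
  have := hs.def'.aestronglyMeasurable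
  fun_prop

lemma modifiedAngle_lower_bound (hab : a ≤ b)
    (hp : IntervalIntegrable (fun t => 1 / p t) volume a b)
    (hq : IntervalIntegrable q volume a b) (hr : IntervalIntegrable r volume a b)
    (hs : IntervalIntegrable s volume a b) (hlam : 0 < lam) {α : ℝ}
    (hθ : ContinuousOn θ (Icc a b))
    (hθsol : ∀ x ∈ Icc a b, θ x = α + ∫ t in a..x, rhs p q r s lam t (θ t)) :
    modifiedAngle √lam α + √lam * (∫ t in a..b, min (1 / p t) (r t))
        - (√lam)⁻¹ * (∫ t in a..b, |q t|) - ∫ t in a..b, |s t|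
      ≤ modifiedAngle √lam (θ b) := by
  set μ := √lam
  have hμ : 0 < μ := sqrt_pos.2 hlam
  have hmin : IntervalIntegrable (fun t => min (1 / p t) (r t)) volume a b :=
    ⟨hp.1.inf hr.1, hp.2.inf hr.2⟩
  have hL := ((hmin.const_mul μ).sub hs.abs).sub (hq.abs.const_mul μ⁻¹)
  have hcomp := integral_le_sub_comp_integral hab
    (fun y => (hasDerivAt_modifiedAngle hμ y).differentiableAt) (lipschitzWith_modifiedAngle hμ)
    (intervalIntegrable_rhs hab hp hq hr hs hθ) hL fun x hx => by
      rw [← hθsol x hx, (hasDerivAt_modifiedAngle hμ _).deriv, ← sq_sqrt hlam.le, mul_comm μ⁻¹,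
        ← div_eq_mul_inv]
      exact mul_min_sub_le_modifiedAngleDeriv_mul hμ _ _ _ _ _
  rw [← hθsol b (right_mem_Icc.2 hab), integral_sub ((hmin.const_mul μ).sub hs.abs)
    (hq.abs.const_mul μ⁻¹), integral_sub (hmin.const_mul μ) hs.abs,
    intervalIntegral.integral_const_mul, intervalIntegral.integral_const_mul] at hcomp
  linarith

end Pruefer

theorem stmt10_general (a b : ℝ) (hab : a < b) (p q r s : ℝ → ℝ)
    (hp : IntegrableOn (fun x => 1 / p x) (Set.Ioo a b))
    (hq : IntegrableOn q (Set.Ioo a b))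
    (hr : IntegrableOn r (Set.Ioo a b))
    (hs : IntegrableOn s (Set.Ioo a b))
    (hppos : ∀ᵐ x ∂(volume.restrict (Set.Ioo a b)), 0 < p x)
    (hrpos : ∀ᵐ x ∂(volume.restrict (Set.Ioo a b)), 0 < r x)
    (α : ℝ) (hα : α ∈ Set.Ico 0 Real.pi)
    (θ : ℝ → ℝ → ℝ)
    (hθcont : ∀ lam : ℝ, ContinuousOn (θ lam) (Set.Icc a b))
    (hθsol : ∀ lam : ℝ, ∀ x ∈ Set.Icc a b,
      θ lam x = α + ∫ t in a..x,
        (1 / p t * Real.cos (θ lam t) ^ 2 - s t * Real.sin (2 * θ lam t)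
          + (lam * r t - q t) * Real.sin (θ lam t) ^ 2)) :
    Filter.Tendsto (fun lam => θ lam b) Filter.atTop Filter.atTop := by
  have hIoo {f : ℝ → ℝ} (hf : IntegrableOn f (Ioo a b)) : IntervalIntegrable f volume a b :=
    (intervalIntegrable_iff_integrableOn_Ioo_of_le hab.le).2 hf
  have hM : 0 < ∫ t in a..b, min (1 / p t) (r t) := by
    have : NeZero (volume.restrict (Ioo a b)) := ⟨by simp [hab]⟩
    rw [integral_of_le hab.le, integral_Ioc_eq_integral_Ioo]
    refine integral_pos_of_ae_pos (hp.inf hr) ?_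
    filter_upwards [hppos, hrpos] with t hpt hrt
    exact lt_min (one_div_pos.2 hpt) hrt
  have hbound : ∀ lam, 1 ≤ lam → √lam * (∫ t in a..b, min (1 / p t) (r t))
      - (∫ t in a..b, |q t|) - (∫ t in a..b, |s t|) - π ≤ θ lam b := fun lam hlam => by
    have hest := Pruefer.modifiedAngle_lower_bound hab.le (hIoo hp) (hIoo hq) (hIoo hr) (hIoo hs)
      (zero_lt_one.trans_le hlam) (hθcont lam) (hθsol lam)
    have hμ : 0 < √lam := sqrt_pos.2 (zero_lt_one.trans_le hlam)
    have hQ : (√lam)⁻¹ * (∫ t in a..b, |q t|) ≤ ∫ t in a..b, |q t| :=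
      mul_le_of_le_one_left (integral_nonneg hab.le fun _ _ => abs_nonneg _)
        (inv_le_one_of_one_le₀ (one_le_sqrt.2 hlam))
    linarith [Pruefer.modifiedAngle_nonneg hμ hα.1, Pruefer.modifiedAngle_le_add_pi hμ (θ lam b)]
  refine tendsto_atTop_mono' _ (eventually_atTop.2 ⟨1, hbound⟩) ?_
  exact tendsto_atTop_add_const_right _ _ (tendsto_atTop_add_const_right _ _
    (tendsto_atTop_add_const_right _ _ (tendsto_sqrt_atTop.atTop_mul_const hM)))

/-- The Prüfer angle tends to `+∞` at `b` as the spectral parameter tends to `+∞`: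
if `θ(·,λ)` solves `θ′ = (1/p)cos²θ − s·sin 2θ + (λr − q)·sin²θ` (integral form)
with `θ(a,λ) = α ∈ [0,π)`, then `θ(b,λ) → ∞` as `λ → +∞`. -/
theorem stmt10 (a b : ℝ) (hab : a < b) (p q r s : ℝ → ℝ)
    (hp : IntegrableOn (fun x => 1 / p x) (Set.Ioo a b))
    (hq : IntegrableOn q (Set.Ioo a b))
    (hr : IntegrableOn r (Set.Ioo a b))
    (hs : IntegrableOn s (Set.Ioo a b))
    (hppos : ∀ᵐ x ∂(volume.restrict (Set.Ioo a b)), 0 < p x)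
    (hrpos : ∀ᵐ x ∂(volume.restrict (Set.Ioo a b)), 0 < r x)
    (α : ℝ) (hα : α ∈ Set.Ico 0 Real.pi)
    (θ : ℝ → ℝ → ℝ)
    (hθcont : ∀ lam : ℝ, ContinuousOn (θ lam) (Set.Icc a b))
    (hθinit : ∀ lam : ℝ, θ lam a = α)
    (hθsol : ∀ lam : ℝ, ∀ x ∈ Set.Icc a b,
      θ lam x = α + ∫ t in a..x,
        (1 / p t * Real.cos (θ lam t) ^ 2 - s t * Real.sin (2 * θ lam t)
          + (lam * r t - q t) * Real.sin (θ lam t) ^ 2)) :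
    Filter.Tendsto (fun lam => θ lam b) Filter.atTop Filter.atTop :=
  stmt10_general a b hab p q r s hp hq hr hs hppos hrpos α hα θ hθcont hθsol
end

section
/- Let θ(t,λ) be the Prüfer angle as above with θ(a,λ) = α ∈ [0,π). Then for every t ∈ (a,b], θ(t,λ) → 0 as λ → −∞. -/
/-!
The angle never becomes negative: where `θ = 0` the equation reads `θ' = 1/p > 0`. As `λ → -∞`
the term `λ r sin² θ` dominates wherever `sin² θ ≥ sin² ε`, i.e. while `θ ∈ [ε, π - ε]`, and
there it drives `θ` down. So `θ`, which starts at `α < π`, can neither climb through that band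
nor stay inside it until time `t`, whence `0 ≤ θ(t, λ) < 2ε` for all sufficiently negative `λ`.
-/

open MeasureTheory intervalIntegral Set Real Filter

theorem ContinuousOn.exists_forall_Ioc_lt {f : ℝ → ℝ} {x₀ y₀ c : ℝ}
    (hf : ContinuousOn f (Icc x₀ y₀)) (h : x₀ ≤ y₀) :
    ∃ x ∈ Icc x₀ y₀, (x = x₀ ∨ f x ≤ c) ∧ ∀ u ∈ Ioc x y₀, c < f u := by
  set S := {x₀} ∪ Icc x₀ y₀ ∩ f ⁻¹' Iic c
  have hS : S ⊆ Icc x₀ y₀ :=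
    union_subset (singleton_subset_iff.2 (left_mem_Icc.2 h)) inter_subset_left
  have hbdd : BddAbove S := ⟨y₀, fun u hu => (hS hu).2⟩
  have hmem : sSup S ∈ S :=
    (isClosed_singleton.union (hf.preimage_isClosed_of_isClosed isClosed_Icc isClosed_Iic)
      ).csSup_mem (singleton_nonempty _ |>.inl) hbdd
  refine ⟨sSup S, hS hmem, hmem.imp id fun h => h.2, fun u hu => ?_⟩
  by_contra! hle
  exact hu.1.not_ge (le_csSup hbdd (Or.inr ⟨⟨(hS hmem).1.trans hu.1.le, hu.2⟩, hle⟩))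

theorem ContinuousOn.exists_le_forall_Ico_lt {f : ℝ → ℝ} {x₀ y₀ c : ℝ}
    (hf : ContinuousOn f (Icc x₀ y₀)) (hc : ∃ u ∈ Icc x₀ y₀, c ≤ f u) :
    ∃ y ∈ Icc x₀ y₀, c ≤ f y ∧ ∀ u ∈ Ico x₀ y, f u < c := by
  set S := Icc x₀ y₀ ∩ f ⁻¹' Ici c
  have hbdd : BddBelow S := ⟨x₀, fun u hu => hu.1.1⟩
  have hmem : sInf S ∈ S :=
    (hf.preimage_isClosed_of_isClosed isClosed_Icc isClosed_Ici).csInf_mem hc hbdd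
  refine ⟨sInf S, hmem.1, hmem.2, fun u hu => ?_⟩
  by_contra! hle
  exact hu.2.not_ge (csInf_le hbdd ⟨⟨hu.1, hu.2.le.trans hmem.1.2⟩, hle⟩)

theorem sin_sq_le_sin_sq_of_mem_Icc {ε x : ℝ} (hε : 0 ≤ ε) (hx : x ∈ Icc ε (π - ε)) :
    sin ε ^ 2 ≤ sin x ^ 2 := by
  have hεπ : ε ≤ π / 2 := by linarith [hx.1.trans hx.2]
  have hle : sin ε ≤ sin x := by
    rcases le_total x (π / 2) with h | h
    · exact sin_le_sin_of_le_of_le_pi_div_two (by linarith [pi_pos]) h hx.1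
    · rw [← sin_pi_sub x]
      exact sin_le_sin_of_le_of_le_pi_div_two (by linarith [pi_pos]) (by linarith)
        (by linarith [hx.2])
  exact pow_le_pow_left₀ (sin_nonneg_of_nonneg_of_le_pi hε (by linarith [pi_pos])) hle 2

theorem MeasureTheory.IntegrableOn.intervalIntegrable_of_mem {f : ℝ → ℝ} {a b x y : ℝ}
    (hf : IntegrableOn f (Icc a b)) (hx : x ∈ Icc a b) (hy : y ∈ Icc a b) :
    IntervalIntegrable f volume x y :=
  (hf.mono_set (uIcc_subset_Icc hx hy)).intervalIntegrable

theorem MeasureTheory.IntegrableOn.integral_sub_integral {f : ℝ → ℝ} {a b x y : ℝ}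
    (hf : IntegrableOn f (Icc a b)) (hx : x ∈ Icc a b) (hy : y ∈ Icc a b) :
    (∫ u in a..y, f u) - ∫ u in a..x, f u = ∫ u in x..y, f u :=
  have ha : a ∈ Icc a b := left_mem_Icc.2 (hx.1.trans hx.2)
  integral_interval_sub_left (hf.intervalIntegrable_of_mem ha hy)
    (hf.intervalIntegrable_of_mem ha hx)

theorem intervalIntegral_pos_of_ae_pos {f : ℝ → ℝ} {x y : ℝ} (hxy : x < y)
    (hf : IntervalIntegrable f volume x y) (hpos : ∀ᵐ u ∂volume.restrict (Ioc x y), 0 < f u) :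
    0 < ∫ u in x..y, f u := by
  have hsupp : (Ioc x y : Set ℝ) ≤ᵐ[volume] (Function.support f ∩ Ioc x y : Set ℝ) := by
    filter_upwards [(ae_restrict_iff' measurableSet_Ioc).1 hpos] with u hu hmem
    exact ⟨(hu hmem).ne', hmem⟩
  rw [integral_pos_iff_support_of_nonneg_ae' _ hf]
  · exact ⟨hxy, (by simpa using hxy : 0 < volume (Ioc x y)).trans_le (measure_mono_ae hsupp)⟩
  · rw [uIoc_of_le hxy.le]
    exact hpos.mono fun u hu => hu.le

theorem exists_pos_forall_le_sub_of_le_sub {F G : ℝ → ℝ} {a b ε : ℝ}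
    (hF : ContinuousOn F (Icc a b)) (hFm : MonotoneOn F (Icc a b))
    (hG : ContinuousOn G (Icc a b)) (hGm : StrictMonoOn G (Icc a b)) (hε : 0 < ε) :
    ∃ ρ > 0, ∀ x ∈ Icc a b, ∀ y ∈ Icc a b, ε ≤ F y - F x → ρ ≤ G y - G x := by
  have hdiff : ∀ {H : ℝ → ℝ}, ContinuousOn H (Icc a b) →
      ContinuousOn (fun z : ℝ × ℝ => H z.2 - H z.1) (Icc a b ×ˢ Icc a b) := fun hH =>
    (hH.comp continuousOn_snd fun _ hz => hz.2).sub (hH.comp continuousOn_fst fun _ hz => hz.1)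
  set S := Icc a b ×ˢ Icc a b ∩ (fun z : ℝ × ℝ => F z.2 - F z.1) ⁻¹' Ici ε
  have hS : IsCompact S := (isCompact_Icc.prod isCompact_Icc).of_isClosed_subset
    ((hdiff hF).preimage_isClosed_of_isClosed (isClosed_Icc.prod isClosed_Icc) isClosed_Ici)
    inter_subset_left
  rcases S.eq_empty_or_nonempty with hempty | hne
  · refine ⟨1, one_pos, fun x hx y hy hxy => ?_⟩
    exact absurd (show (x, y) ∈ S from ⟨⟨hx, hy⟩, hxy⟩) (hempty ▸ notMem_empty _)
  obtain ⟨z, ⟨⟨hz₁, hz₂⟩, hzε⟩, hmin⟩ := hS.exists_isMinOn hne ((hdiff hG).mono inter_subset_left)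
  have hz : z.1 < z.2 := lt_of_not_ge fun h => by
    have := hFm hz₂ hz₁ h
    simp only [mem_preimage, mem_Ici] at hzε
    linarith
  exact ⟨G z.2 - G z.1, sub_pos.2 (hGm hz₁ hz₂ hz), fun x hx y hy hxy =>
    hmin (show (x, y) ∈ S from ⟨⟨hx, hy⟩, hxy⟩)⟩

theorem sub_eq_integral_of_eq_add_integral {Θ F : ℝ → ℝ} {a b x y : ℝ}
    (hF : IntegrableOn F (Icc a b)) (heq : ∀ x ∈ Icc a b, Θ x = Θ a + ∫ u in a..x, F u)
    (hx : x ∈ Icc a b) (hy : y ∈ Icc a b) : Θ y - Θ x = ∫ u in x..y, F u := by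
  rw [heq y hy, heq x hx, add_sub_add_left_eq_sub, hF.integral_sub_integral hx hy]

theorem exists_mem_Ioc_integral_lt {g : ℝ → ℝ} {c x₀ η : ℝ} (hcx : c < x₀)
    (hg : IntegrableOn g (Icc c x₀)) (hη : 0 < η) :
    ∃ d ∈ Ioc c x₀, ∫ u in c..d, g u < η := by
  have hcont := (continuousOn_primitive_interval (a := c) (b := x₀) (μ := volume)
    (by rwa [uIcc_of_le hcx.le])).mono (Icc_subset_uIcc (a := c) (b := x₀))
  obtain ⟨δ, hδ, hδη⟩ := Metric.continuousWithinAt_iff.1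
    (hcont c (left_mem_Icc.2 hcx.le)) η hη
  have hd : min x₀ (c + δ / 2) ∈ Ioc c x₀ := ⟨lt_min hcx (by linarith), min_le_left _ _⟩
  refine ⟨_, hd, ?_⟩
  have := hδη (Ioc_subset_Icc_self hd) (by
    rw [Real.dist_eq, abs_of_pos (sub_pos.2 hd.1)]
    linarith [min_le_right x₀ (c + δ / 2)])
  rw [integral_same, Real.dist_eq, sub_zero] at this
  exact (le_abs_self _).trans_lt this

/-- Past the last zero of `Θ` before a negative value, `Θ` drops on a short interval by its maximal
depth `M` there, whereas the lower bound only allows a drop of `M ∫ g < M / 2`. -/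
theorem nonneg_of_eq_add_integral {Θ F g : ℝ → ℝ} {a b : ℝ} (hΘ : ContinuousOn Θ (Icc a b))
    (hF : IntegrableOn F (Icc a b)) (hg : IntegrableOn g (Icc a b)) (hg0 : ∀ u, 0 ≤ g u)
    (heq : ∀ x ∈ Icc a b, Θ x = Θ a + ∫ u in a..x, F u)
    (hlow : ∀ᵐ u ∂volume.restrict (Icc a b), -(g u * |Θ u|) ≤ F u) (ha : 0 ≤ Θ a) :
    ∀ x ∈ Icc a b, 0 ≤ Θ x := by
  intro x₀ hx₀
  by_contra! hneg
  obtain ⟨c, hc, hc0, hnegc⟩ := (hΘ.mono (Icc_subset_Icc_right hx₀.2)).neg.exists_forall_Ioc_lt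
    hx₀.1 (c := 0)
  have hΘc : 0 ≤ Θ c := hc0.elim (fun h => h ▸ ha) fun h => by simpa using h
  have hcx₀ : c < x₀ := lt_of_le_of_ne hc.2 (by rintro rfl; linarith)
  have hcab : Icc c x₀ ⊆ Icc a b := Icc_subset_Icc hc.1 hx₀.2
  obtain ⟨d, hd, hgd⟩ := exists_mem_Ioc_integral_lt hcx₀ (hg.mono_set hcab) one_half_pos
  obtain ⟨x₁, hx₁, hmax⟩ := isCompact_Icc.exists_isMaxOn (nonempty_Icc.2 hd.1.le)
    (hΘ.mono ((Icc_subset_Icc_right hd.2).trans hcab)).neg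
  have hM : 0 < -Θ x₁ := (hnegc d hd).trans_le (hmax (right_mem_Icc.2 hd.1.le))
  have hcx₁ : Icc c x₁ ⊆ Icc a b := (Icc_subset_Icc_right (hx₁.2.trans hd.2)).trans hcab
  have hx₁ab : x₁ ∈ Icc a b := hcx₁ (right_mem_Icc.2 hx₁.1)
  have hcab' : c ∈ Icc a b := hcab (left_mem_Icc.2 hcx₀.le)
  have hFg : ∀ᵐ u ∂volume.restrict (Icc c x₁), -Θ x₁ * -g u ≤ F u := by
    rw [← Measure.restrict_congr_set Ioc_ae_eq_Icc]
    filter_upwards [ae_restrict_mem measurableSet_Ioc,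
      ae_restrict_of_ae_restrict_of_subset (Ioc_subset_Icc_self.trans hcx₁) hlow] with u hu hFu
    have hu₀ : u ∈ Ioc c x₀ := ⟨hu.1, hu.2.trans (hx₁.2.trans hd.2)⟩
    have habs : |Θ u| ≤ -Θ x₁ := by
      rw [abs_of_neg (neg_pos.1 (hnegc u hu₀))]
      exact hmax ⟨hu.1.le, hu.2.trans hx₁.2⟩
    nlinarith [hg0 u]
  have hint : -Θ x₁ * -∫ u in c..x₁, g u ≤ Θ x₁ - Θ c := by
    rw [sub_eq_integral_of_eq_add_integral hF heq hcab' hx₁ab, ← intervalIntegral.integral_neg,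
      ← intervalIntegral.integral_const_mul]
    exact integral_mono_ae_restrict hx₁.1
      (((hg.intervalIntegrable_of_mem hcab' hx₁ab).neg).const_mul _)
      (hF.intervalIntegrable_of_mem hcab' hx₁ab) hFg
  have hgx₁ : ∫ u in c..x₁, g u ≤ ∫ u in c..d, g u :=
    integral_mono_interval le_rfl hx₁.1 hx₁.2 (ae_of_all _ hg0)
      (hg.intervalIntegrable_of_mem hcab' (hcab ⟨hd.1.le, hd.2⟩))
  nlinarith

noncomputable def pruferRHS (p q r s : ℝ → ℝ) (lam : ℝ) (θ : ℝ → ℝ) (u : ℝ) : ℝ :=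
  1 / p u * cos (θ u) ^ 2 - s u * sin (2 * θ u) + (lam * r u - q u) * sin (θ u) ^ 2

noncomputable def pruferBound (p q s : ℝ → ℝ) (u : ℝ) : ℝ :=
  |1 / p u| + |s u| + |q u|

structure IntegrableCoeffs (a b : ℝ) (p q r s : ℝ → ℝ) : Prop where
  integrableOn_inv_p : IntegrableOn (fun x => 1 / p x) (Icc a b)
  integrableOn_q : IntegrableOn q (Icc a b)
  integrableOn_r : IntegrableOn r (Icc a b)
  integrableOn_s : IntegrableOn s (Icc a b)

structure IsPruferSolution (a b : ℝ) (p q r s : ℝ → ℝ) (lam : ℝ) (θ : ℝ → ℝ) : Prop where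
  continuousOn : ContinuousOn θ (Icc a b)
  eq_add_integral : ∀ x ∈ Icc a b, θ x = θ a + ∫ u in a..x, pruferRHS p q r s lam θ u

section Prufer

variable {a b : ℝ} {p q r s : ℝ → ℝ} {lam : ℝ} {θ : ℝ → ℝ}

theorem pruferBound_nonneg (u : ℝ) : 0 ≤ pruferBound p q s u := by
  unfold pruferBound
  positivity

theorem pruferRHS_le (u : ℝ) :
    pruferRHS p q r s lam θ u ≤ pruferBound p q s u + lam * r u * sin (θ u) ^ 2 := by
  have habs : ∀ x c : ℝ, |c| ≤ 1 → x * c ≤ |x| := fun x c hc =>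
    (le_abs_self _).trans (by rw [abs_mul]; exact mul_le_of_le_one_right (abs_nonneg _) hc)
  have hcos := habs (1 / p u) _
    (abs_le.2 ⟨by linarith [sq_nonneg (cos (θ u))], cos_sq_le_one (θ u)⟩)
  have hsin := habs (-s u) _ (abs_sin_le_one (2 * θ u))
  have hsin_sq := habs (-q u) _
    (abs_le.2 ⟨by linarith [sq_nonneg (sin (θ u))], sin_sq_le_one (θ u)⟩)
  simp only [abs_neg] at hsin hsin_sq
  unfold pruferRHS pruferBound
  linarith

theorem neg_mul_abs_le_pruferRHS {u : ℝ} (hp : 0 < p u) :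
    -((2 * |s u| + |lam| * |r u| + |q u|) * |θ u|) ≤ pruferRHS p q r s lam θ u := by
  have hcos : 0 ≤ 1 / p u * cos (θ u) ^ 2 := by positivity
  have hsin : |s u * sin (2 * θ u)| ≤ 2 * |s u| * |θ u| :=
    calc |s u * sin (2 * θ u)| = |s u| * |sin (2 * θ u)| := abs_mul _ _
      _ ≤ |s u| * |2 * θ u| := mul_le_mul_of_nonneg_left abs_sin_le_abs (abs_nonneg _)
      _ = 2 * |s u| * |θ u| := by rw [abs_mul, abs_two]; ring
  have hsin_sq_le : sin (θ u) ^ 2 ≤ |θ u| := by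
    rw [← sq_abs]
    nlinarith [abs_sin_le_abs (x := θ u), abs_sin_le_one (θ u), abs_nonneg (sin (θ u))]
  have hsin_sq : |(lam * r u - q u) * sin (θ u) ^ 2| ≤ (|lam| * |r u| + |q u|) * |θ u| := by
    rw [abs_mul, abs_of_nonneg (sq_nonneg (sin (θ u)))]
    exact mul_le_mul ((abs_sub _ _).trans_eq (by rw [abs_mul])) hsin_sq_le (sq_nonneg _)
      (by positivity)
  unfold pruferRHS
  linarith [le_abs_self (s u * sin (2 * θ u)), neg_abs_le ((lam * r u - q u) * sin (θ u) ^ 2)]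

namespace IntegrableCoeffs

theorem integrableOn_pruferBound (hc : IntegrableCoeffs a b p q r s) :
    IntegrableOn (pruferBound p q s) (Icc a b) :=
  (hc.integrableOn_inv_p.abs.add hc.integrableOn_s.abs).add hc.integrableOn_q.abs

theorem integrableOn_pruferRHS (hc : IntegrableCoeffs a b p q r s) (lam : ℝ)
    (hθ : ContinuousOn θ (Icc a b)) : IntegrableOn (pruferRHS p q r s lam θ) (Icc a b) := by
  have hcos := hc.integrableOn_inv_p.mul_continuousOn
    ((continuous_cos.comp_continuousOn hθ).pow 2) isCompact_Icc
  have hsin := hc.integrableOn_s.mul_continuousOn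
    (continuous_sin.comp_continuousOn (hθ.const_smul (2 : ℝ))) isCompact_Icc
  have hsin_sq := IntegrableOn.mul_continuousOn (g := fun u => lam * r u - q u)
    ((hc.integrableOn_r.const_mul lam).sub hc.integrableOn_q)
    ((continuous_sin.comp_continuousOn hθ).pow 2) isCompact_Icc
  exact (hcos.sub hsin).add hsin_sq

end IntegrableCoeffs

namespace IsPruferSolution

theorem sub_eq_integral (hθ : IsPruferSolution a b p q r s lam θ)
    (hc : IntegrableCoeffs a b p q r s) {x y : ℝ} (hx : x ∈ Icc a b) (hy : y ∈ Icc a b) :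
    θ y - θ x = ∫ u in x..y, pruferRHS p q r s lam θ u :=
  sub_eq_integral_of_eq_add_integral (hc.integrableOn_pruferRHS lam hθ.continuousOn)
    hθ.eq_add_integral hx hy

theorem nonneg (hθ : IsPruferSolution a b p q r s lam θ) (hc : IntegrableCoeffs a b p q r s)
    (hp : ∀ᵐ x ∂volume.restrict (Icc a b), 0 < p x) (ha : 0 ≤ θ a) :
    ∀ x ∈ Icc a b, 0 ≤ θ x :=
  nonneg_of_eq_add_integral (g := fun u => 2 * |s u| + |lam| * |r u| + |q u|) hθ.continuousOn
    (hc.integrableOn_pruferRHS lam hθ.continuousOn)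
    (((hc.integrableOn_s.abs.const_mul 2).add (hc.integrableOn_r.abs.const_mul |lam|)).add
      hc.integrableOn_q.abs) (fun u => by positivity) hθ.eq_add_integral
    (hp.mono fun _ => neg_mul_abs_le_pruferRHS) ha

theorem sub_le (hθ : IsPruferSolution a b p q r s lam θ) (hc : IntegrableCoeffs a b p q r s)
    (hr : ∀ᵐ x ∂volume.restrict (Icc a b), 0 < r x) (hlam : lam ≤ 0) {K x y : ℝ}
    (hx : x ∈ Icc a b) (hy : y ∈ Icc a b) (hxy : x ≤ y)
    (hK : ∀ u ∈ Ioo x y, K ≤ sin (θ u) ^ 2) :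
    θ y - θ x ≤ (∫ u in x..y, pruferBound p q s u) + lam * K * ∫ u in x..y, r u := by
  have hbound := hc.integrableOn_pruferBound.intervalIntegrable_of_mem hx hy
  have hr' := hc.integrableOn_r.intervalIntegrable_of_mem hx hy
  rw [hθ.sub_eq_integral hc hx hy, ← intervalIntegral.integral_const_mul,
    ← intervalIntegral.integral_add hbound (hr'.const_mul _)]
  refine integral_mono_ae_restrict hxy
    ((hc.integrableOn_pruferRHS lam hθ.continuousOn).intervalIntegrable_of_mem hx hy)
    (hbound.add (hr'.const_mul _)) ?_
  rw [← Measure.restrict_congr_set Ioo_ae_eq_Icc]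
  filter_upwards [ae_restrict_mem measurableSet_Ioo, ae_restrict_of_ae_restrict_of_subset
    (Ioo_subset_Icc_self.trans (Icc_subset_Icc hx.1 hy.2)) hr] with u hu hru
  have hlamr : lam * r u ≤ 0 := mul_nonpos_of_nonpos_of_nonneg hlam hru.le
  nlinarith [pruferRHS_le (p := p) (q := q) (r := r) (s := s) (lam := lam) (θ := θ) u,
    mul_le_mul_of_nonpos_left (hK u hu) hlamr]

end IsPruferSolution

/-- Either `[x, y]` carries less than `ε` of the mass of `pruferBound`, or it carries at least
a fixed `ρ > 0` of the mass of `r`, and then `λ K ρ` outweighs all of the mass of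
`pruferBound`. -/
theorem eventually_forall_sub_lt (hab : a ≤ b) (hc : IntegrableCoeffs a b p q r s)
    (hr : ∀ᵐ x ∂volume.restrict (Icc a b), 0 < r x) {ε K : ℝ} (hε : 0 < ε) (hK : 0 < K) :
    ∀ᶠ lam in atBot, ∀ θ, IsPruferSolution a b p q r s lam θ →
      ∀ x ∈ Icc a b, ∀ y ∈ Icc a b, x ≤ y → (∀ u ∈ Ioo x y, K ≤ sin (θ u) ^ 2) →
        θ y - θ x < ε := by
  have hbound := hc.integrableOn_pruferBound
  have hprim : ∀ {f : ℝ → ℝ}, IntegrableOn f (Icc a b) →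
      ContinuousOn (fun x => ∫ u in a..x, f u) (Icc a b) := fun hf => by
    rw [← uIcc_of_le hab] at hf ⊢
    exact continuousOn_primitive_interval hf
  have hmono : MonotoneOn (fun x => ∫ u in a..x, pruferBound p q s u) (Icc a b) :=
    fun x hx y hy hxy => sub_nonneg.1 <| by
      rw [hbound.integral_sub_integral hx hy]
      exact integral_nonneg hxy fun u _ => pruferBound_nonneg u
  have hsmono : StrictMonoOn (fun x => ∫ u in a..x, r u) (Icc a b) :=
    fun x hx y hy hxy => sub_pos.1 <| by
      rw [hc.integrableOn_r.integral_sub_integral hx hy]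
      exact intervalIntegral_pos_of_ae_pos hxy (hc.integrableOn_r.intervalIntegrable_of_mem hx hy)
        (ae_restrict_of_ae_restrict_of_subset
          (Ioc_subset_Icc_self.trans (Icc_subset_Icc hx.1 hy.2)) hr)
  obtain ⟨ρ, hρ, hρle⟩ := exists_pos_forall_le_sub_of_le_sub (hprim hbound) hmono
    (hprim hc.integrableOn_r) hsmono hε
  set H := ∫ u in a..b, pruferBound p q s u
  filter_upwards [eventually_le_atBot (min 0 (-H / (K * ρ)))]
    with lam hlam θ hθ x hx y hy hxy hK'
  have hlam0 : lam * K ≤ 0 := mul_nonpos_of_nonpos_of_nonneg (hlam.trans (min_le_left _ _)) hK.le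
  have hinc := hθ.sub_le hc hr (hlam.trans (min_le_left _ _)) hx hy hxy hK'
  have hR : 0 ≤ ∫ u in x..y, r u := integral_nonneg_of_ae_restrict hxy <|
    (ae_restrict_of_ae_restrict_of_subset (Icc_subset_Icc hx.1 hy.2) hr).mono fun _ hu => hu.le
  rcases lt_or_ge (∫ u in x..y, pruferBound p q s u) ε with hsmall | hlarge
  · nlinarith
  have hρR : ρ ≤ ∫ u in x..y, r u := by
    simpa only [hc.integrableOn_r.integral_sub_integral hx hy] using
      hρle x hx y hy (by simpa only [hbound.integral_sub_integral hx hy] using hlarge)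
  have hHxy : ∫ u in x..y, pruferBound p q s u ≤ H :=
    integral_mono_interval hx.1 hxy hy.2 (ae_of_all _ pruferBound_nonneg)
      (hbound.intervalIntegrable_of_mem (left_mem_Icc.2 hab) (right_mem_Icc.2 hab))
  have hlamρ : lam * (K * ρ) ≤ -H :=
    (le_div_iff₀ (mul_pos hK hρ)).1 (hlam.trans (min_le_right _ _))
  nlinarith [mul_le_mul_of_nonpos_left hρR hlam0]

theorem eventually_sub_lt (hc : IntegrableCoeffs a b p q r s)
    (hr : ∀ᵐ x ∂volume.restrict (Icc a b), 0 < r x) {x y : ℝ} (hx : x ∈ Icc a b)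
    (hy : y ∈ Icc a b) (hxy : x < y) {K : ℝ} (hK : 0 < K) (M : ℝ) :
    ∀ᶠ lam in atBot, ∀ θ, IsPruferSolution a b p q r s lam θ →
      (∀ u ∈ Ioo x y, K ≤ sin (θ u) ^ 2) → θ y - θ x < M := by
  have hR : 0 < ∫ u in x..y, r u :=
    intervalIntegral_pos_of_ae_pos hxy (hc.integrableOn_r.intervalIntegrable_of_mem hx hy)
      (ae_restrict_of_ae_restrict_of_subset
        (Ioc_subset_Icc_self.trans (Icc_subset_Icc hx.1 hy.2)) hr)
  have hdown : Tendsto (fun lam => (∫ u in x..y, pruferBound p q s u)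
      + lam * K * ∫ u in x..y, r u) atBot atBot :=
    tendsto_atBot_add_const_left _ _ ((tendsto_id.atBot_mul_const hK).atBot_mul_const hR)
  filter_upwards [hdown.eventually (eventually_lt_atBot M), eventually_le_atBot 0]
    with lam hlt hlam θ hθ hK'
  exact (hθ.sub_le hc hr hlam hx hy hxy.le hK').trans_lt hlt

/-- On a last stretch where `θ > ε`, `θ` stays in the band `[ε, π - ε]` where
`sin² θ ≥ sin² ε`; it either starts at a level `≤ π - 2ε` and climbs by at least `ε`, or starts
at `a` and is pushed below `0`. -/
theorem eventually_lt_two_mul (hc : IntegrableCoeffs a b p q r s)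
    (hr : ∀ᵐ x ∂volume.restrict (Icc a b), 0 < r x) {α ε t : ℝ} (hε : 0 < ε) (h3ε : 3 * ε ≤ π)
    (hα : α ≤ π - 2 * ε) (ht : t ∈ Ioc a b) :
    ∀ᶠ lam in atBot, ∀ θ, IsPruferSolution a b p q r s lam θ → θ a = α → θ t < 2 * ε := by
  have hab : a ≤ b := ht.1.le.trans ht.2
  have hK : 0 < sin ε ^ 2 := pow_pos (sin_pos_of_pos_of_lt_pi hε (by linarith)) 2
  have hband : ∀ {θ : ℝ → ℝ} {x y : ℝ}, (∀ u ∈ Ioo x y, ε < θ u ∧ θ u < π - ε) →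
      ∀ u ∈ Ioo x y, sin ε ^ 2 ≤ sin (θ u) ^ 2 := fun h u hu =>
    sin_sq_le_sin_sq_of_mem_Icc hε.le ⟨(h u hu).1.le, (h u hu).2.le⟩
  filter_upwards [eventually_forall_sub_lt hab hc hr hε hK,
    eventually_sub_lt hc hr (left_mem_Icc.2 hab) ⟨ht.1.le, ht.2⟩ ht.1 hK (2 * ε - α)]
    with lam hclimb hdescend θ hθ hθa
  have hbelow : ∀ u ∈ Icc a b, θ u < π - ε := by
    by_contra! ⟨u₀, hu₀, hu₀ε⟩
    obtain ⟨y, hy, hθy, hlt⟩ := hθ.continuousOn.exists_le_forall_Ico_lt ⟨u₀, hu₀, hu₀ε⟩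
    obtain ⟨x, hx, hθx, hgt⟩ :=
      (hθ.continuousOn.mono (Icc_subset_Icc_right hy.2)).exists_forall_Ioc_lt hy.1 (c := ε)
    have hθx' : θ x ≤ π - 2 * ε := hθx.elim (fun h => h ▸ hθa ▸ hα) fun h => by linarith
    have := hclimb θ hθ x ⟨hx.1, hx.2.trans hy.2⟩ y hy hx.2 <| hband fun u hu =>
      ⟨hgt u (Ioo_subset_Ioc_self hu), hlt u ⟨hx.1.trans hu.1.le, hu.2⟩⟩
    linarith
  by_contra! hθt
  obtain ⟨x, hx, hθx, hgt⟩ :=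
    (hθ.continuousOn.mono (Icc_subset_Icc_right ht.2)).exists_forall_Ioc_lt ht.1.le (c := ε)
  have hxt : ∀ u ∈ Ioo x t, sin ε ^ 2 ≤ sin (θ u) ^ 2 := hband fun u hu =>
    ⟨hgt u (Ioo_subset_Ioc_self hu), hbelow u ⟨hx.1.trans hu.1.le, hu.2.le.trans ht.2⟩⟩
  rcases hθx with rfl | hθx
  · linarith [hdescend θ hθ hxt]
  · linarith [hclimb θ hθ x ⟨hx.1, hx.2.trans ht.2⟩ t ⟨ht.1.le, ht.2⟩ hx.2 hxt]

end Prufer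

theorem stmt11_general (a b : ℝ) (p q r s : ℝ → ℝ)
    (hp : IntegrableOn (fun x => 1 / p x) (Set.Ioo a b))
    (hq : IntegrableOn q (Set.Ioo a b))
    (hr : IntegrableOn r (Set.Ioo a b))
    (hs : IntegrableOn s (Set.Ioo a b))
    (hppos : ∀ᵐ x ∂(volume.restrict (Set.Ioo a b)), 0 < p x)
    (hrpos : ∀ᵐ x ∂(volume.restrict (Set.Ioo a b)), 0 < r x)
    (α : ℝ) (hα : α ∈ Set.Ico 0 Real.pi)
    (θ : ℝ → ℝ → ℝ)
    (hθcont : ∀ lam : ℝ, ContinuousOn (θ lam) (Set.Icc a b))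
    (hθinit : ∀ lam : ℝ, θ lam a = α)
    (hθsol : ∀ lam : ℝ, ∀ x ∈ Set.Icc a b,
      θ lam x = α + ∫ t in a..x,
        (1 / p t * Real.cos (θ lam t) ^ 2 - s t * Real.sin (2 * θ lam t)
          + (lam * r t - q t) * Real.sin (θ lam t) ^ 2)) :
    ∀ t ∈ Set.Ioc a b, Filter.Tendsto (fun lam => θ lam t) Filter.atBot (nhds 0) := by
  intro t ht
  have hrestrict : volume.restrict (Icc a b) = volume.restrict (Ioo a b) :=
    Measure.restrict_congr_set Ioo_ae_eq_Icc.symm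
  have hIoo : ∀ {f : ℝ → ℝ}, IntegrableOn f (Ioo a b) → IntegrableOn f (Icc a b) :=
    (integrableOn_Icc_iff_integrableOn_Ioo enorm_ne_top enorm_ne_top).2
  have hc : IntegrableCoeffs a b p q r s := ⟨hIoo hp, hIoo hq, hIoo hr, hIoo hs⟩
  have hsol : ∀ lam, IsPruferSolution a b p q r s lam (θ lam) := fun lam =>
    ⟨hθcont lam, fun x hx => (hθinit lam).symm ▸ hθsol lam x hx⟩
  have hnonneg : ∀ lam, 0 ≤ θ lam t := fun lam =>
    (hsol lam).nonneg hc (hrestrict ▸ hppos) ((hθinit lam).symm ▸ hα.1) t ⟨ht.1.le, ht.2⟩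
  refine tendsto_order.2 ⟨fun c hc0 => Eventually.of_forall fun lam => hc0.trans_le (hnonneg lam),
    fun c hc0 => ?_⟩
  set ε := min (c / 2) ((π - α) / 3)
  have hε : 0 < ε := lt_min (half_pos hc0) (by linarith [hα.2])
  filter_upwards [eventually_lt_two_mul (α := α) hc (hrestrict ▸ hrpos) hε
    (by linarith [min_le_right (c / 2) ((π - α) / 3), hα.1])
    (by linarith [min_le_right (c / 2) ((π - α) / 3)]) ht] with lam hlam
  linarith [hlam (θ lam) (hsol lam) (hθinit lam), min_le_left (c / 2) ((π - α) / 3)]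

/-- The Prüfer angle tends to `0` as the spectral parameter tends to `−∞`: if
`θ(·,λ)` solves `θ′ = (1/p)cos²θ − s·sin 2θ + (λr − q)·sin²θ` (integral form) with
`θ(a,λ) = α ∈ [0,π)`, then for every `t ∈ (a,b]`, `θ(t,λ) → 0` as `λ → −∞`. -/
theorem stmt11 (a b : ℝ) (hab : a < b) (p q r s : ℝ → ℝ)
    (hp : IntegrableOn (fun x => 1 / p x) (Set.Ioo a b))
    (hq : IntegrableOn q (Set.Ioo a b))
    (hr : IntegrableOn r (Set.Ioo a b))
    (hs : IntegrableOn s (Set.Ioo a b))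
    (hppos : ∀ᵐ x ∂(volume.restrict (Set.Ioo a b)), 0 < p x)
    (hrpos : ∀ᵐ x ∂(volume.restrict (Set.Ioo a b)), 0 < r x)
    (α : ℝ) (hα : α ∈ Set.Ico 0 Real.pi)
    (θ : ℝ → ℝ → ℝ)
    (hθcont : ∀ lam : ℝ, ContinuousOn (θ lam) (Set.Icc a b))
    (hθinit : ∀ lam : ℝ, θ lam a = α)
    (hθsol : ∀ lam : ℝ, ∀ x ∈ Set.Icc a b,
      θ lam x = α + ∫ t in a..x,
        (1 / p t * Real.cos (θ lam t) ^ 2 - s t * Real.sin (2 * θ lam t)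
          + (lam * r t - q t) * Real.sin (θ lam t) ^ 2)) :
    ∀ t ∈ Set.Ioc a b, Filter.Tendsto (fun lam => θ lam t) Filter.atBot (nhds 0) :=
  stmt11_general a b p q r s hp hq hr hs hppos hrpos α hα θ hθcont hθinit hθsol
end

section
/- With the same setting, fixing q, r, s and viewing the simple eigenvalue λ as a function of 1/p on the positive cone of L¹((a,b),ℝ), λ is Fréchet differentiable at 1/p with derivative λ′(1/p)h = −∫ₐᵇ |w^[1]|² h, where w is the normalized eigenfunction and w^[1] = p(w′+sw). -/
/-!
Let `u = w (1/p)`, `v = w (1/p + h)` with eigenvalues `λ`, `μ`. Integrating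
`(u v̄^[1] - v̄ u^[1])' = -h u^[1] v̄^[1] + (λ - μ) r u v̄` over `[a, b]` (Lagrange's identity for
the quasi-differential system; the boundary terms cancel) gives
`(λ - μ) ∫ r u v̄ = ∫ h u^[1] v̄^[1]`. As `h → 0` in `L¹`, `v → u` and `v^[1] → u^[1]` uniformly, so
`∫ r u v̄ = 1 + o(1)` by the normalization of `u`, and the right-hand side is
`∫ h |u^[1]|² + o(‖h‖₁)`.
-/

open MeasureTheory intervalIntegral Set Filter Topology
open scoped ComplexConjugate

namespace AbsolutelyContinuousOnInterval

variable {X Y : Type*} [PseudoMetricSpace X] [PseudoMetricSpace Y] {f g : ℝ → X} {a b : ℝ}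

theorem const (c : X) : AbsolutelyContinuousOnInterval (fun _ : ℝ => c) a b := by
  simpa [AbsolutelyContinuousOnInterval] using tendsto_const_nhds

theorem congr (hf : AbsolutelyContinuousOnInterval f a b) (hfg : EqOn f g (uIcc a b)) :
    AbsolutelyContinuousOnInterval g a b := by
  refine hf.congr' (eventually_inf_principal.2 (Eventually.of_forall fun E hE => ?_))
  refine Finset.sum_congr rfl fun i hi => ?_
  rw [hfg (hE.1 i hi).1, hfg (hE.1 i hi).2]

theorem _root_.Isometry.comp_absolutelyContinuousOnInterval {φ : X → Y} (hφ : Isometry φ)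
    (hf : AbsolutelyContinuousOnInterval f a b) :
    AbsolutelyContinuousOnInterval (φ ∘ f) a b := by
  simpa only [AbsolutelyContinuousOnInterval, Function.comp_apply, hφ.dist_eq] using hf

end AbsolutelyContinuousOnInterval

theorem IntervalIntegrable.absolutelyContinuousOnInterval_intervalIntegral_complex
    {f : ℝ → ℂ} {a b c : ℝ} (h : IntervalIntegrable f volume a b) (hc : c ∈ uIcc a b) :
    AbsolutelyContinuousOnInterval (fun x => ∫ t in c..x, f t) a b := by
  have hre : AbsolutelyContinuousOnInterval (fun x => ((∫ t in c..x, (f t).re : ℝ) : ℂ)) a b :=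
    Complex.isometry_ofReal.comp_absolutelyContinuousOnInterval
      (IntervalIntegrable.absolutelyContinuousOnInterval_intervalIntegral ⟨h.1.re, h.2.re⟩ hc)
  have him : AbsolutelyContinuousOnInterval (fun x => ((∫ t in c..x, (f t).im : ℝ) : ℂ)) a b :=
    Complex.isometry_ofReal.comp_absolutelyContinuousOnInterval
      (IntervalIntegrable.absolutelyContinuousOnInterval_intervalIntegral ⟨h.1.im, h.2.im⟩ hc)
  refine (hre.add (him.const_smul Complex.I)).congr fun x hx => ?_
  have hcx : IntervalIntegrable f volume c x := h.mono_set (uIcc_subset_uIcc hc hx)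
  have hre_comm : ∫ t in c..x, (f t).re = (∫ t in c..x, f t).re :=
    Complex.reCLM.intervalIntegral_comp_comm hcx
  have him_comm : ∫ t in c..x, (f t).im = (∫ t in c..x, f t).im :=
    Complex.imCLM.intervalIntegral_comp_comm hcx
  simp only [Pi.add_apply, smul_eq_mul, hre_comm, him_comm, mul_comm Complex.I, Complex.re_add_im]

theorem integral_deriv_mul_eq_sub_of_eq_add_integral {F G f g : ℝ → ℂ} {a b : ℝ} (hab : a ≤ b)
    (hf : IntervalIntegrable f volume a b) (hg : IntervalIntegrable g volume a b)
    (hF : ∀ x ∈ Icc a b, F x = F a + ∫ t in a..x, f t)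
    (hG : ∀ x ∈ Icc a b, G x = G a + ∫ t in a..x, g t) :
    ∫ x in a..b, (f x * G x + F x * g x) = F b * G b - F a * G a := by
  set P : ℝ → ℂ := fun x => F a + ∫ t in a..x, f t
  set Q : ℝ → ℂ := fun x => G a + ∫ t in a..x, g t
  have hFP : EqOn F P (uIcc a b) := fun x hx => hF x (uIcc_of_le hab ▸ hx)
  have hGQ : EqOn G Q (uIcc a b) := fun x hx => hG x (uIcc_of_le hab ▸ hx)
  have hP : AbsolutelyContinuousOnInterval P a b :=
    (AbsolutelyContinuousOnInterval.const _).add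
      (hf.absolutelyContinuousOnInterval_intervalIntegral_complex left_mem_uIcc)
  have hQ : AbsolutelyContinuousOnInterval Q a b :=
    (AbsolutelyContinuousOnInterval.const _).add
      (hg.absolutelyContinuousOnInterval_intervalIntegral_complex left_mem_uIcc)
  set k : ℝ → ℂ := fun x => f x * Q x + P x * g x
  have hk : IntervalIntegrable k volume a b :=
    (hf.mul_continuousOn hQ.continuousOn).add (hg.continuousOn_mul hP.continuousOn)
  set Φ : ℝ → ℂ := fun x => P x * Q x - ∫ t in a..x, k t
  have hΦ : AbsolutelyContinuousOnInterval Φ a b :=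
    (hP.fun_smul hQ).sub (hk.absolutelyContinuousOnInterval_intervalIntegral_complex left_mem_uIcc)
  -- `Φ` is absolutely continuous with vanishing derivative a.e., hence constant.
  have hΦ' : ∀ᵐ x, x ∈ uIcc a b → HasDerivAt Φ 0 x := by
    filter_upwards [hf.ae_hasDerivAt_integral, hg.ae_hasDerivAt_integral,
      hk.ae_hasDerivAt_integral] with x hfx hgx hkx hx
    exact ((((hfx hx a left_mem_uIcc).const_add (F a)).mul
      ((hgx hx a left_mem_uIcc).const_add (G a))).sub (hkx hx a left_mem_uIcc)).congr_deriv
      (sub_self _)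
  obtain ⟨C, hC⟩ := hΦ.const_of_ae_hasDerivAt_zero hΦ'
  have hΦab : Φ b = Φ a := (hC b right_mem_uIcc).trans (hC a left_mem_uIcc).symm
  rw [integral_congr (g := k) fun x hx => by rw [hFP hx, hGQ hx], hFP right_mem_uIcc,
    hGQ right_mem_uIcc]
  simp only [Φ, P, Q, integral_same, add_zero, sub_zero] at hΦab ⊢
  linear_combination -hΦab

section Estimates

variable {a b : ℝ} {φ : ℝ → ℝ} {F G : ℝ → ℂ}

theorem IntervalIntegrable.ofReal (hφ : IntervalIntegrable φ volume a b) :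
    IntervalIntegrable (fun x => (φ x : ℂ)) volume a b :=
  ⟨hφ.1.ofReal, hφ.2.ofReal⟩

theorem intervalIntegrable_ofReal_mul_of_continuousOn (hab : a ≤ b)
    (hφ : IntervalIntegrable φ volume a b) (hF : ContinuousOn F (Icc a b)) :
    IntervalIntegrable (fun x => (φ x : ℂ) * F x) volume a b :=
  hφ.ofReal.mul_continuousOn (uIcc_of_le hab ▸ hF)

theorem norm_integral_ofReal_mul_sub_le {B : ℝ} (hab : a ≤ b)
    (hφ : IntervalIntegrable φ volume a b) (hF : ContinuousOn F (Icc a b))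
    (hG : ContinuousOn G (Icc a b)) (hFG : ∀ x ∈ Icc a b, ‖F x - G x‖ ≤ B) :
    ‖(∫ x in a..b, (φ x : ℂ) * F x) - ∫ x in a..b, (φ x : ℂ) * G x‖
      ≤ B * ∫ x in a..b, |φ x| := by
  rw [← integral_sub (intervalIntegrable_ofReal_mul_of_continuousOn hab hφ hF)
    (intervalIntegrable_ofReal_mul_of_continuousOn hab hφ hG),
    ← intervalIntegral.integral_const_mul]
  refine norm_integral_le_of_norm_le hab (Eventually.of_forall fun x hx => ?_)
    (hφ.abs.const_mul B)
  rw [← mul_sub, norm_mul, Complex.norm_real, Real.norm_eq_abs, mul_comm B]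
  exact mul_le_mul_of_nonneg_left (hFG x (Ioc_subset_Icc_self hx)) (abs_nonneg _)

theorem integral_ofReal_mul_mul_conj :
    ∫ x in a..b, (φ x : ℂ) * (F x * conj (F x)) = ((∫ x in a..b, ‖F x‖ ^ 2 * φ x : ℝ) : ℂ) := by
  rw [← integral_ofReal]
  refine integral_congr fun x _ => ?_
  rw [Complex.mul_conj, Complex.normSq_eq_norm_sq]
  push_cast
  ring

end Estimates

/-- Integrated form of `w' = σ w1 - s w`, `w1' = s w1 + (q - lam r) w` on `[a, b]`, where
`σ = 1/p` and `w1 = p (w' + s w)` is the quasi-derivative. -/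
def IsQuasiSolution (a b : ℝ) (σ s q r : ℝ → ℝ) (lam : ℝ) (w w1 : ℝ → ℂ) : Prop :=
  ∀ x ∈ Icc a b,
    w x = w a + ∫ t in a..x, ((σ t : ℝ) * w1 t - (s t : ℝ) * w t) ∧
    w1 x = w1 a + ∫ t in a..x, ((s t : ℝ) * w1 t + ((q t : ℝ) - (lam : ℝ) * (r t : ℝ)) * w t)

namespace IsQuasiSolution

variable {a b lam mu : ℝ} {σ τ s q r : ℝ → ℝ} {u u1 v v1 : ℝ → ℂ}

theorem star (h : IsQuasiSolution a b σ s q r lam u u1) :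
    IsQuasiSolution a b σ s q r lam (fun x => conj (u x)) (fun x => conj (u1 x)) := by
  intro x hx
  obtain ⟨hux, hu1x⟩ := h x hx
  dsimp only
  rw [hux, hu1x]
  simp [← intervalIntegral_conj]

theorem intervalIntegrable_integrands (hab : a ≤ b) (hσ : IntervalIntegrable σ volume a b)
    (hs : IntervalIntegrable s volume a b) (hq : IntervalIntegrable q volume a b)
    (hr : IntervalIntegrable r volume a b) (hu : ContinuousOn u (Icc a b))
    (hu1 : ContinuousOn u1 (Icc a b)) :
    IntervalIntegrable (fun t => (σ t : ℂ) * u1 t - (s t : ℂ) * u t) volume a b ∧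
    IntervalIntegrable
      (fun t => (s t : ℂ) * u1 t + ((q t : ℂ) - (lam : ℂ) * (r t : ℂ)) * u t) volume a b :=
  ⟨(intervalIntegrable_ofReal_mul_of_continuousOn hab hσ hu1).sub
      (intervalIntegrable_ofReal_mul_of_continuousOn hab hs hu),
    (intervalIntegrable_ofReal_mul_of_continuousOn hab hs hu1).add
      ((hq.ofReal.sub (hr.ofReal.const_mul _)).mul_continuousOn (uIcc_of_le hab ▸ hu))⟩

theorem lagrange_identity (hab : a ≤ b) (hσ : IntervalIntegrable σ volume a b)
    (hτ : IntervalIntegrable τ volume a b) (hs : IntervalIntegrable s volume a b)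
    (hq : IntervalIntegrable q volume a b) (hr : IntervalIntegrable r volume a b)
    (hu : IsQuasiSolution a b σ s q r lam u u1) (hv : IsQuasiSolution a b τ s q r mu v v1)
    (hu_c : ContinuousOn u (Icc a b)) (hu1_c : ContinuousOn u1 (Icc a b))
    (hv_c : ContinuousOn v (Icc a b)) (hv1_c : ContinuousOn v1 (Icc a b))
    (hbdry : u b * conj (v1 b) - conj (v b) * u1 b = u a * conj (v1 a) - conj (v a) * u1 a) :
    ((lam - mu : ℝ) : ℂ) * ∫ x in a..b, (r x : ℂ) * (u x * conj (v x))
      = ∫ x in a..b, ((τ x - σ x : ℝ) : ℂ) * (u1 x * conj (v1 x)) := by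
  have hcv_c : ContinuousOn (fun x => conj (v x)) (Icc a b) :=
    Complex.continuous_conj.comp_continuousOn hv_c
  have hcv1_c : ContinuousOn (fun x => conj (v1 x)) (Icc a b) :=
    Complex.continuous_conj.comp_continuousOn hv1_c
  obtain ⟨hfu, hgu⟩ := intervalIntegrable_integrands (lam := lam) hab hσ hs hq hr hu_c hu1_c
  obtain ⟨hfv, hgv⟩ := intervalIntegrable_integrands (lam := mu) hab hτ hs hq hr hcv_c hcv1_c
  have hv' := hv.star
  have h₁ := integral_deriv_mul_eq_sub_of_eq_add_integral hab hfu hgv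
    (fun x hx => (hu x hx).1) (fun x hx => (hv' x hx).2)
  have h₂ := integral_deriv_mul_eq_sub_of_eq_add_integral hab hfv hgu
    (fun x hx => (hv' x hx).1) (fun x hx => (hu x hx).2)
  have hi₁ := (hfu.mul_continuousOn (uIcc_of_le hab ▸ hcv1_c)).add
    (hgv.continuousOn_mul (uIcc_of_le hab ▸ hu_c))
  have hi₂ := (hfv.mul_continuousOn (uIcc_of_le hab ▸ hu1_c)).add
    (hgu.continuousOn_mul (uIcc_of_le hab ▸ hcv_c))
  have hcancel := integral_sub hi₁ hi₂
  rw [h₁, h₂] at hcancel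
  rw [← intervalIntegral.integral_const_mul, ← sub_eq_zero, ← integral_sub
    ((intervalIntegrable_ofReal_mul_of_continuousOn hab hr (hu_c.fun_mul hcv_c)).const_mul _)
    (intervalIntegrable_ofReal_mul_of_continuousOn hab (hτ.sub hσ) (hu1_c.fun_mul hcv1_c))]
  refine (integral_congr fun x _ => ?_).trans (hcancel.trans (by linear_combination hbdry))
  push_cast
  ring

theorem abs_sub_add_integral_le (hab : a ≤ b) (hσ : IntervalIntegrable σ volume a b)
    (hτ : IntervalIntegrable τ volume a b) (hs : IntervalIntegrable s volume a b)
    (hq : IntervalIntegrable q volume a b) (hr : IntervalIntegrable r volume a b)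
    (hu : IsQuasiSolution a b σ s q r lam u u1) (hv : IsQuasiSolution a b τ s q r mu v v1)
    (hu_c : ContinuousOn u (Icc a b)) (hu1_c : ContinuousOn u1 (Icc a b))
    (hv_c : ContinuousOn v (Icc a b)) (hv1_c : ContinuousOn v1 (Icc a b))
    (hbdry : u b * conj (v1 b) - conj (v b) * u1 b = u a * conj (v1 a) - conj (v a) * u1 a)
    (hnorm : ∫ x in a..b, ‖u x‖ ^ 2 * r x = 1) {K M η : ℝ}
    (hK : ∀ x ∈ Icc a b, ‖u x‖ ≤ K) (hM : ∀ x ∈ Icc a b, ‖u1 x‖ ≤ M)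
    (hvu : ∀ x ∈ Icc a b, ‖v x - u x‖ ≤ η) (hv1u1 : ∀ x ∈ Icc a b, ‖v1 x - u1 x‖ ≤ η)
    (hη : K * η * ∫ x in a..b, |r x| ≤ 1 / 2) :
    |mu - lam + ∫ x in a..b, ‖u1 x‖ ^ 2 * (τ x - σ x)|
      ≤ 2 * (M + M ^ 2 * (K * ∫ x in a..b, |r x|)) * η * ∫ x in a..b, |τ x - σ x| := by
  set R := ∫ x in a..b, |r x|
  set Δ := ∫ x in a..b, |τ x - σ x|
  set I := ∫ x in a..b, ‖u1 x‖ ^ 2 * (τ x - σ x)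
  set D := ∫ x in a..b, (r x : ℂ) * (u x * conj (v x))
  set H := ∫ x in a..b, ((τ x - σ x : ℝ) : ℂ) * (u1 x * conj (v1 x))
  have hK0 : 0 ≤ K := (norm_nonneg _).trans (hK a (left_mem_Icc.2 hab))
  have hM0 : 0 ≤ M := (norm_nonneg _).trans (hM a (left_mem_Icc.2 hab))
  have hΔ0 : 0 ≤ Δ := intervalIntegral.integral_nonneg hab fun x _ => abs_nonneg _
  have hconj {w : ℝ → ℂ} (hw : ContinuousOn w (Icc a b)) :
      ContinuousOn (fun x => conj (w x)) (Icc a b) :=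
    Complex.continuous_conj.comp_continuousOn hw
  have hL : ((lam - mu : ℝ) : ℂ) * D = H :=
    lagrange_identity hab hσ hτ hs hq hr hu hv hu_c hu1_c hv_c hv1_c hbdry
  have hI : (I : ℂ) = ∫ x in a..b, ((τ x - σ x : ℝ) : ℂ) * (u1 x * conj (u1 x)) :=
    integral_ofReal_mul_mul_conj.symm
  have hD : ‖D - 1‖ ≤ K * η * R := by
    have h1 : (1 : ℂ) = ∫ x in a..b, (r x : ℂ) * (u x * conj (u x)) := by
      rw [integral_ofReal_mul_mul_conj, hnorm, Complex.ofReal_one]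
    rw [h1]
    refine norm_integral_ofReal_mul_sub_le hab hr (hu_c.fun_mul (hconj hv_c))
      (hu_c.fun_mul (hconj hu_c)) fun x hx => ?_
    rw [← mul_sub, ← map_sub, norm_mul, Complex.norm_conj]
    exact mul_le_mul (hK x hx) (hvu x hx) (norm_nonneg _) hK0
  have hIH : ‖(I : ℂ) - H‖ ≤ M * η * Δ := by
    rw [hI]
    refine norm_integral_ofReal_mul_sub_le hab (hτ.sub hσ) (hu1_c.fun_mul (hconj hu1_c))
      (hu1_c.fun_mul (hconj hv1_c)) fun x hx => ?_
    rw [← mul_sub, ← map_sub, norm_mul, Complex.norm_conj, norm_sub_rev]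
    exact mul_le_mul (hM x hx) (hv1u1 x hx) (norm_nonneg _) hM0
  have hIabs : |I| ≤ M ^ 2 * Δ := by
    have := norm_integral_ofReal_mul_sub_le (G := 0) (B := M ^ 2) hab (hτ.sub hσ)
      (hu1_c.fun_mul (hconj hu1_c)) continuousOn_const fun x hx => ?_
    · rw [← hI] at this
      simpa only [Pi.zero_apply, mul_zero, intervalIntegral.integral_zero, sub_zero,
        Complex.norm_real, Real.norm_eq_abs] using this
    rw [Pi.zero_apply, sub_zero, norm_mul, Complex.norm_conj, ← sq]
    exact pow_le_pow_left₀ (norm_nonneg _) (hM x hx) 2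
  have hDhalf : 1 / 2 ≤ ‖D‖ := by
    have := norm_sub_norm_le (1 : ℂ) D
    rw [norm_one, norm_sub_rev] at this
    linarith
  have hED : ((mu - lam + I : ℝ) : ℂ) * D = ((I : ℂ) - H) + I * (D - 1) := by
    push_cast at hL ⊢
    linear_combination -hL
  calc |mu - lam + I| ≤ 2 * (|mu - lam + I| * ‖D‖) := by nlinarith [abs_nonneg (mu - lam + I)]
    _ = 2 * ‖((mu - lam + I : ℝ) : ℂ) * D‖ := by rw [norm_mul, Complex.norm_real, Real.norm_eq_abs]
    _ ≤ 2 * (M * η * Δ + M ^ 2 * Δ * (K * η * R)) := by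
      rw [hED]
      gcongr
      refine (norm_add_le _ _).trans (add_le_add hIH ?_)
      rw [norm_mul, Complex.norm_real, Real.norm_eq_abs]
      exact mul_le_mul hIabs hD (norm_nonneg _) (by positivity)
    _ = 2 * (M + M ^ 2 * (K * R)) * η * Δ := by ring

end IsQuasiSolution

theorem MeasureTheory.Lp.coeFn_add_sub_ae {α : Type*} [MeasurableSpace α] {μ : Measure α}
    {p : ENNReal} (f g : Lp ℝ p μ) : ∀ᵐ x ∂μ, (f + g) x - f x = g x := by
  filter_upwards [Lp.coeFn_add f g] with x hx
  rw [hx, Pi.add_apply, add_sub_cancel_left]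

section IntervalLp

variable {a b : ℝ} {f g : Lp ℝ 1 (volume.restrict (Ioo a b))}

theorem integral_mul_coeFn_add_sub (hab : a ≤ b) (φ : ℝ → ℝ) :
    ∫ x in a..b, φ x * ((f + g) x - f x) = ∫ x in a..b, φ x * g x := by
  rw [integral_of_le hab, integral_of_le hab, integral_Ioc_eq_integral_Ioo,
    integral_Ioc_eq_integral_Ioo]
  exact integral_congr_ae ((Lp.coeFn_add_sub_ae f g).mono fun x hx => by dsimp only; rw [hx])

theorem integral_abs_coeFn_add_sub (hab : a ≤ b) : ∫ x in a..b, |(f + g) x - f x| = ‖g‖ := by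
  rw [integral_of_le hab, integral_Ioc_eq_integral_Ioo, L1.norm_eq_integral_norm]
  exact integral_congr_ae ((Lp.coeFn_add_sub_ae f g).mono fun x hx => by
    dsimp only; rw [hx, Real.norm_eq_abs])

end IntervalLp

theorem stmt14_general (a b : ℝ) (hab : a < b) (q r s : ℝ → ℝ)
    (hq : IntegrableOn q (Set.Ioo a b))
    (hr : IntegrableOn r (Set.Ioo a b))
    (hs : IntegrableOn s (Set.Ioo a b))
    (lam : Lp ℝ 1 (volume.restrict (Set.Ioo a b)) → ℝ)
    (w w1 : Lp ℝ 1 (volume.restrict (Set.Ioo a b)) → ℝ → ℂ)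
    (hwcont : ∀ σ, ContinuousOn (w σ) (Set.Icc a b))
    (hw1cont : ∀ σ, ContinuousOn (w1 σ) (Set.Icc a b))
    (hsol : ∀ σ, ∀ x ∈ Set.Icc a b,
      w σ x = w σ a + ∫ t in a..x,
        ((σ t : ℝ) * w1 σ t - (s t : ℝ) * w σ t) ∧
      w1 σ x = w1 σ a + ∫ t in a..x,
        ((s t : ℝ) * w1 σ t + ((q t : ℝ) - (lam σ : ℝ) * (r t : ℝ)) * w σ t))
    (hnorm : ∀ σ, ∫ x in a..b, ‖w σ x‖ ^ 2 * r x = 1)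
    (hbdry : ∀ σ τ,
      w σ b * (starRingEnd ℂ) (w1 τ b) - (starRingEnd ℂ) (w τ b) * w1 σ b =
      w σ a * (starRingEnd ℂ) (w1 τ a) - (starRingEnd ℂ) (w τ a) * w1 σ a)
    (invp : Lp ℝ 1 (volume.restrict (Set.Ioo a b)))
    (heigcont : ∀ ε > 0, ∃ δ > 0, ∀ τ, ‖τ - invp‖ < δ →
      ∀ x ∈ Set.Icc a b, ‖w τ x - w invp x‖ < ε ∧ ‖w1 τ x - w1 invp x‖ < ε)
    (f : Lp ℝ 1 (volume.restrict (Set.Ioo a b)) →L[ℝ] ℝ)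
    (hf : ∀ h, f h = -∫ x in a..b, ‖w1 invp x‖ ^ 2 * h x) :
    ∀ ε > 0, ∃ δ > 0, ∀ h : Lp ℝ 1 (volume.restrict (Set.Ioo a b)),
      0 ≤ h → ‖h‖ < δ →
        |lam (invp + h) - lam invp - f h| ≤ ε * ‖h‖ := by
  have hII {g : ℝ → ℝ} : IntegrableOn g (Ioo a b) → IntervalIntegrable g volume a b :=
    (intervalIntegrable_iff_integrableOn_Ioo_of_le hab.le).2
  obtain ⟨K, hK⟩ := isCompact_Icc.exists_bound_of_continuousOn (hwcont invp)
  obtain ⟨M, hM⟩ := isCompact_Icc.exists_bound_of_continuousOn (hw1cont invp)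
  set R := ∫ x in a..b, |r x|
  intro ε hε
  have hR : ∀ᶠ η in 𝓝 (0 : ℝ), K * η * R < 1 / 2 :=
    ContinuousAt.eventually_lt (by fun_prop) continuousAt_const (by norm_num)
  have hε' : ∀ᶠ η in 𝓝 (0 : ℝ), 2 * (M + M ^ 2 * (K * R)) * η < ε :=
    ContinuousAt.eventually_lt (by fun_prop) continuousAt_const (by simpa)
  obtain ⟨η, ⟨hηR, hηε⟩, hη⟩ := ((hR.and hε').filter_mono nhdsWithin_le_nhds).and
    (self_mem_nhdsWithin (s := Ioi (0 : ℝ))) |>.exists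
  obtain ⟨δ, hδ, hclose⟩ := heigcont η hη
  refine ⟨δ, hδ, fun h _ hhδ => ?_⟩
  have hτ : ‖invp + h - invp‖ < δ := by rwa [add_sub_cancel_left]
  have key := IsQuasiSolution.abs_sub_add_integral_le hab.le (hII (L1.integrable_coeFn invp))
    (hII (L1.integrable_coeFn (invp + h))) (hII hs) (hII hq) (hII hr) (hsol invp)
    (hsol (invp + h)) (hwcont _) (hw1cont _) (hwcont _) (hw1cont _) (hbdry _ _) (hnorm invp)
    hK hM (fun x hx => (hclose _ hτ x hx).1.le) (fun x hx => (hclose _ hτ x hx).2.le) hηR.le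
  rw [integral_mul_coeFn_add_sub hab.le, integral_abs_coeFn_add_sub hab.le] at key
  rw [hf, sub_neg_eq_add]
  exact key.trans (by gcongr)

/-- Fréchet differentiability of a simple eigenvalue with respect to `1/p` on the
positive cone of `L¹((a,b))`: with `q, r, s` fixed, if for each `σ ∈ L¹` (playing the
role of `1/p`) `lam σ` is an eigenvalue with normalized eigenfunction `w σ`
(quasi-derivative `w1 σ`, so `w′ = σ·w¹ − s·w`), boundary terms vanish and
eigenfunctions depend continuously on `σ` near `invp`, then for perturbations `h ≥ 0`
one has `lam(invp + h) − lam(invp) − f h = o(‖h‖)` where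
`f h = −∫ₐᵇ |w¹|² h`. -/
theorem stmt14 (a b : ℝ) (hab : a < b) (q r s : ℝ → ℝ)
    (hq : IntegrableOn q (Set.Ioo a b))
    (hr : IntegrableOn r (Set.Ioo a b))
    (hs : IntegrableOn s (Set.Ioo a b))
    (hrpos : ∀ᵐ x ∂(volume.restrict (Set.Ioo a b)), 0 < r x)
    (lam : Lp ℝ 1 (volume.restrict (Set.Ioo a b)) → ℝ)
    (w w1 : Lp ℝ 1 (volume.restrict (Set.Ioo a b)) → ℝ → ℂ)
    (hwcont : ∀ σ, ContinuousOn (w σ) (Set.Icc a b))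
    (hw1cont : ∀ σ, ContinuousOn (w1 σ) (Set.Icc a b))
    (hsol : ∀ σ, ∀ x ∈ Set.Icc a b,
      w σ x = w σ a + ∫ t in a..x,
        ((σ t : ℝ) * w1 σ t - (s t : ℝ) * w σ t) ∧
      w1 σ x = w1 σ a + ∫ t in a..x,
        ((s t : ℝ) * w1 σ t + ((q t : ℝ) - (lam σ : ℝ) * (r t : ℝ)) * w σ t))
    (hnontrivial : ∀ σ, ∃ x ∈ Set.Icc a b, w σ x ≠ 0)
    (hnorm : ∀ σ, ∫ x in a..b, ‖w σ x‖ ^ 2 * r x = 1)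
    (hbdry : ∀ σ τ,
      w σ b * (starRingEnd ℂ) (w1 τ b) - (starRingEnd ℂ) (w τ b) * w1 σ b =
      w σ a * (starRingEnd ℂ) (w1 τ a) - (starRingEnd ℂ) (w τ a) * w1 σ a)
    (invp : Lp ℝ 1 (volume.restrict (Set.Ioo a b)))
    (hinvp_pos : ∀ᵐ x ∂(volume.restrict (Set.Ioo a b)), 0 < invp x)
    (heigcont : ∀ ε > 0, ∃ δ > 0, ∀ τ, ‖τ - invp‖ < δ →
      ∀ x ∈ Set.Icc a b, ‖w τ x - w invp x‖ < ε ∧ ‖w1 τ x - w1 invp x‖ < ε)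
    (f : Lp ℝ 1 (volume.restrict (Set.Ioo a b)) →L[ℝ] ℝ)
    (hf : ∀ h, f h = -∫ x in a..b, ‖w1 invp x‖ ^ 2 * h x) :
    ∀ ε > 0, ∃ δ > 0, ∀ h : Lp ℝ 1 (volume.restrict (Set.Ioo a b)),
      0 ≤ h → ‖h‖ < δ →
        |lam (invp + h) - lam invp - f h| ≤ ε * ‖h‖ :=
  stmt14_general a b hab q r s hq hr hs lam w w1 hwcont hw1cont hsol hnorm hbdry invp heigcont f hf
end

section
/- Suppose the first Dirichlet eigenfunction Ψ₀ of the distributional Sturm–Liouville problem has no zeros in (a,b), and let ψ₀ be a real eigenfunction of the coupled condition y(b) = k₁₁ y(a), y^[1](b) = k₂₁ y(a) + k₂₂ y^[1](a) with k₁₁ > 0, associated with an eigenvalue λ₀(K) < λ₀ᴰ. Then ψ₀ has no zeros in [a,b]. -/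
/-!
Between two consecutive zeros of `ψ`, the Wronskian identity
`W(ψ, Ψ)' = (λ₀ - λᴰ) r ψ Ψ` (Sturm comparison) forces the Dirichlet eigenfunction `Ψ`, which has
constant sign on `(a, b)`, to vanish; so `ψ` has at most one zero in `[a, b]`. Zeros of a nontrivial
solution are simple (uniqueness via Gronwall's lemma), hence sign changes. A single zero would give
`ψ a` and `ψ b` opposite signs, contradicting `ψ b = k₁₁ ψ a` with `k₁₁ > 0`.
-/

open MeasureTheory intervalIntegral Set

/-- A real (Carathéodory) solution of the distributional Sturm–Liouville system
`y′ = (1/p)·y¹ − s·y`, `(y¹)′ = s·y¹ + (q − λr)·y` on `[a,b]`, in integral form. -/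
def SLRSolution (a b lam : ℝ) (p q r s : ℝ → ℝ) (y y1 : ℝ → ℝ) : Prop :=
  ContinuousOn y (Set.Icc a b) ∧ ContinuousOn y1 (Set.Icc a b) ∧
  ∀ x ∈ Set.Icc a b,
    y x = y a + ∫ t in a..x, (1 / p t * y1 t - s t * y t) ∧
    y1 x = y1 a + ∫ t in a..x, (s t * y1 t + (q t - lam * r t) * y t)

open Filter Topology
open scoped Interval

section IntegralForm

variable {a b x₁ x₂ : ℝ} {f g F G : ℝ → ℝ}

lemma IntervalIntegrable.mono_Icc (hf : IntervalIntegrable f volume a b)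
    (hx₁ : x₁ ∈ Icc a b) (hx₂ : x₂ ∈ Icc a b) : IntervalIntegrable f volume x₁ x₂ :=
  hf.mono_set (uIcc_subset_uIcc (Icc_subset_uIcc hx₁) (Icc_subset_uIcc hx₂))

lemma MeasureTheory.IntegrableOn.intervalIntegrable_mul_continuousOn (hab : a ≤ b)
    (hf : IntegrableOn f (Ioo a b)) (hF : ContinuousOn F (Icc a b)) :
    IntervalIntegrable (fun t => f t * F t) volume a b :=
  ((intervalIntegrable_iff_integrableOn_Ioo_of_le hab).2 hf).mul_continuousOn
    (by rwa [uIcc_of_le hab])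

lemma abs_integral_le_integral_abs_uIoc (f : ℝ → ℝ) :
    |∫ t in a..b, f t| ≤ ∫ t in Ι a b, |f t| := by
  simpa only [Real.norm_eq_abs] using norm_integral_le_integral_norm_uIoc (f := f) (μ := volume)

lemma eq_add_integral_of_mem (hf : IntervalIntegrable f volume a b)
    (hF : ∀ x ∈ Icc a b, F x = F a + ∫ t in a..x, f t)
    (hx₁ : x₁ ∈ Icc a b) (hx₂ : x₂ ∈ Icc a b) :
    F x₂ = F x₁ + ∫ t in x₁..x₂, f t := by
  have ha : a ∈ Icc a b := left_mem_Icc.2 (hx₁.1.trans hx₁.2)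
  rw [hF x₂ hx₂, hF x₁ hx₁,
    ← integral_interval_sub_left (hf.mono_Icc ha hx₂) (hf.mono_Icc ha hx₁)]
  ring

lemma IntervalIntegrable.absolutelyContinuousOnInterval_const_add_integral
    (hf : IntervalIntegrable f volume a b) (c : ℝ) :
    AbsolutelyContinuousOnInterval (fun x => c + ∫ t in a..x, f t) a b :=
  (LipschitzWith.const c).lipschitzOnWith.absolutelyContinuousOnInterval.add
    (hf.absolutelyContinuousOnInterval_intervalIntegral left_mem_uIcc)

lemma IntervalIntegrable.ae_deriv_const_add_integral (hf : IntervalIntegrable f volume a b)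
    (c : ℝ) : ∀ᵐ x, x ∈ uIcc a b → deriv (fun x => c + ∫ t in a..x, f t) x = f x := by
  filter_upwards [hf.ae_hasDerivAt_integral] with x hx hmem
  exact ((hx hmem a left_mem_uIcc).const_add c).deriv

lemma mul_eq_add_integral (hf : IntervalIntegrable f volume a b)
    (hg : IntervalIntegrable g volume a b)
    (hF : ∀ x ∈ Icc a b, F x = F a + ∫ t in a..x, f t)
    (hG : ∀ x ∈ Icc a b, G x = G a + ∫ t in a..x, g t)
    (hx₁ : x₁ ∈ Icc a b) (hx₂ : x₂ ∈ Icc a b) :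
    F x₂ * G x₂ = F x₁ * G x₁ + ∫ t in x₁..x₂, (f t * G t + F t * g t) := by
  have hab : a ≤ b := hx₁.1.trans hx₁.2
  have hsub : uIcc x₁ x₂ ⊆ uIcc a b :=
    uIcc_subset_uIcc (Icc_subset_uIcc hx₁) (Icc_subset_uIcc hx₂)
  have key := ((hf.absolutelyContinuousOnInterval_const_add_integral (F a)).mono hsub
    ).integral_deriv_mul_eq_sub
      ((hg.absolutelyContinuousOnInterval_const_add_integral (G a)).mono hsub)
  have hcongr : ∫ t in x₁..x₂, (f t * G t + F t * g t) = ∫ t in x₁..x₂,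
      (deriv (fun x => F a + ∫ t in a..x, f t) t * (G a + ∫ u in a..t, g u)
        + (F a + ∫ u in a..t, f u) * deriv (fun x => G a + ∫ t in a..x, g t) t) := by
    refine integral_congr_ae ?_
    filter_upwards [hf.ae_deriv_const_add_integral (F a), hg.ae_deriv_const_add_integral (G a)]
      with t hdf hdg ht
    have htab : t ∈ uIcc a b := hsub (uIoc_subset_uIcc ht)
    rw [hdf htab, hdg htab, ← hF t (by rwa [uIcc_of_le hab] at htab),
      ← hG t (by rwa [uIcc_of_le hab] at htab)]
  rw [hcongr, key, ← hF x₂ hx₂, ← hG x₂ hx₂, ← hF x₁ hx₁, ← hG x₁ hx₁]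
  ring

end IntegralForm

section Gronwall

variable {a b : ℝ} {u K : ℝ → ℝ}

lemma eventually_eq_zero_of_le_integral (hK : IntervalIntegrable K volume a b)
    (hK0 : ∀ t, 0 ≤ K t) (hu : ContinuousOn u (Icc a b)) (hu0 : ∀ x ∈ Icc a b, 0 ≤ u x)
    {c : ℝ} (hc : c ∈ Icc a b) (hle : ∀ x ∈ Icc a b, u x ≤ ∫ t in Ι c x, K t * u t) :
    ∀ᶠ x in 𝓝[Icc a b] c, u x = 0 := by
  have hab : a ≤ b := hc.1.trans hc.2
  have hGc : ContinuousWithinAt (fun x => ∫ t in c..x, K t) (Icc a b) c := by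
    have := continuousOn_primitive_interval' hK (Icc_subset_uIcc hc)
    rw [uIcc_of_le hab] at this
    exact this c hc
  obtain ⟨δ, hδ, hδG⟩ := Metric.continuousWithinAt_iff.1 hGc (1 / 2) (by norm_num)
  set N := Icc (max a (c - δ / 2)) (min b (c + δ / 2))
  have hNsub : N ⊆ Icc a b := Icc_subset_Icc (le_max_left _ _) (min_le_left _ _)
  have hcN : c ∈ N := ⟨max_le hc.1 (by linarith), le_min hc.2 (by linarith)⟩
  obtain ⟨ξ, hξN, hξmax⟩ := isCompact_Icc.exists_isMaxOn ⟨c, hcN⟩ (hu.mono hNsub)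
  have hξab := hNsub hξN
  have hJ : Ι c ξ ⊆ N := uIoc_subset_uIcc.trans (ordConnected_Icc.uIcc_subset hcN hξN)
  have hsmall : ∫ t in Ι c ξ, K t < 1 / 2 := by
    have hdist : dist ξ c < δ := by
      rw [Real.dist_eq, abs_lt]
      constructor <;>
        linarith [hξN.1, hξN.2, le_max_right a (c - δ / 2), min_le_right b (c + δ / 2)]
    have := hδG hξab hdist
    rwa [integral_same, dist_zero_right, Real.norm_eq_abs, abs_integral_eq_abs_integral_uIoc,
      abs_of_nonneg (setIntegral_nonneg measurableSet_uIoc fun t _ => hK0 t)] at this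
  have hKu : IntervalIntegrable (fun t => K t * u t) volume c ξ :=
    (hK.mul_continuousOn (by rwa [uIcc_of_le hab])).mono_Icc hc hξab
  have hKc : IntervalIntegrable K volume c ξ := hK.mono_Icc hc hξab
  have hξ : u ξ ≤ 0 := by
    have hle' : u ξ ≤ (∫ t in Ι c ξ, K t) * u ξ :=
      calc u ξ ≤ ∫ t in Ι c ξ, K t * u t := hle ξ hξab
        _ ≤ ∫ t in Ι c ξ, K t * u ξ :=
          setIntegral_mono_on hKu.def' (hKc.def'.mul_const _) measurableSet_uIoc
            fun t ht => mul_le_mul_of_nonneg_left (hξmax (hJ ht)) (hK0 t)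
        _ = (∫ t in Ι c ξ, K t) * u ξ := integral_mul_const _ _
    nlinarith [hu0 ξ hξab]
  filter_upwards [mem_nhdsWithin_of_mem_nhds (Metric.ball_mem_nhds c (half_pos hδ)),
    self_mem_nhdsWithin] with x hx hxab
  have hxN : x ∈ N := by
    rw [Metric.mem_ball, Real.dist_eq, abs_lt] at hx
    exact ⟨max_le hxab.1 (by linarith), le_min hxab.2 (by linarith)⟩
  exact le_antisymm ((hξmax hxN).trans hξ) (hu0 x hxab)

lemma eq_zero_of_le_integral (hK : IntervalIntegrable K volume a b) (hK0 : ∀ t, 0 ≤ K t)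
    (hu : ContinuousOn u (Icc a b)) (hu0 : ∀ x ∈ Icc a b, 0 ≤ u x)
    (hle : ∀ c ∈ Icc a b, ∀ x ∈ Icc a b, u x ≤ u c + ∫ t in Ι c x, K t * u t)
    {x₀ : ℝ} (hx₀ : x₀ ∈ Icc a b) (h0 : u x₀ = 0) : ∀ x ∈ Icc a b, u x = 0 := by
  intro x hx
  refine (isPreconnected_Icc.induction₂' (fun x y => u x = 0 ↔ u y = 0) ?_
    (fun _ _ _ _ _ _ h₁ h₂ => h₁.trans h₂) hx₀ hx).1 h0
  intro c hc
  by_cases huc : u c = 0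
  · filter_upwards [eventually_eq_zero_of_le_integral hK hK0 hu hu0 hc
      fun x hx => by simpa [huc] using hle c hc x hx] with y hy
    simp [huc, hy]
  · filter_upwards [(hu c hc).eventually_ne huc] with y hy
    simp [huc, hy]

end Gronwall

section Positivity

variable {a b x₁ x₂ : ℝ} {f : ℝ → ℝ}

lemma ae_restrict_uIoc_of_ae_restrict_Ioo {P : ℝ → Prop}
    (h : ∀ᵐ t ∂volume.restrict (Ioo a b), P t)
    (hx₁ : x₁ ∈ Icc a b) (hx₂ : x₂ ∈ Icc a b) : ∀ᵐ t ∂volume.restrict (Ι x₁ x₂), P t := by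
  rw [Measure.restrict_congr_set Ioo_ae_eq_Icc] at h
  exact ae_restrict_of_ae_restrict_of_subset
    (uIoc_subset_uIcc.trans (ordConnected_Icc.uIcc_subset hx₁ hx₂)) h

lemma integral_uIoc_pos_of_ae_pos (hne : x₁ ≠ x₂) (hf : IntervalIntegrable f volume x₁ x₂)
    (hpos : ∀ᵐ t ∂volume.restrict (Ι x₁ x₂), 0 < f t) : 0 < ∫ t in Ι x₁ x₂, f t := by
  rw [setIntegral_pos_iff_support_of_nonneg_ae (hpos.mono fun t ht => ht.le) hf.def']
  have hsupp : Ι x₁ x₂ ≤ᵐ[volume] (Function.support f ∩ Ι x₁ x₂ : Set ℝ) := by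
    filter_upwards [(ae_restrict_iff' measurableSet_uIoc).1 hpos] with t ht hmem
    exact ⟨(ht hmem).ne', hmem⟩
  refine lt_of_lt_of_le ?_ (measure_mono_ae hsupp)
  rw [Real.volume_uIoc]
  exact ENNReal.ofReal_pos.2 (abs_pos.2 (sub_ne_zero.2 hne.symm))

lemma mul_integral_pos_of_integral_uIoc_pos (hne : x₁ ≠ x₂) (h : 0 < ∫ t in Ι x₁ x₂, f t) :
    0 < (x₂ - x₁) * ∫ t in x₁..x₂, f t := by
  rw [intervalIntegral_eq_integral_uIoc]
  split_ifs with h12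
  · rw [one_smul]
    exact mul_pos (sub_pos.2 (h12.lt_of_ne hne)) h
  · rw [neg_smul, one_smul]
    nlinarith [sub_neg.2 (lt_of_not_ge h12)]

end Positivity

section SignChange

variable {x₀ x c M : ℝ} {g v σ z : ℝ → ℝ}

lemma integral_uIoc_pos_of_perturbation
    (hg : IntervalIntegrable g volume x₀ x) (hσ : IntervalIntegrable σ volume x₀ x)
    (hv : ContinuousOn v (uIcc x₀ x)) (hz : ContinuousOn z (uIcc x₀ x))
    (hz_eq : ∀ w ∈ uIcc x₀ x, z w = ∫ t in x₀..w, (g t * v t - σ t * z t))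
    (hg0 : ∀ᵐ t ∂volume.restrict (Ι x₀ x), 0 ≤ g t) (hG : 0 < ∫ t in Ι x₀ x, g t)
    (hcv : ∀ t ∈ uIcc x₀ x, c ≤ v t) (hvM : ∀ t ∈ uIcc x₀ x, |v t| ≤ M)
    (hS : ∫ t in Ι x₀ x, |σ t| ≤ 1 / 2) (hSc : 2 * M * ∫ t in Ι x₀ x, |σ t| < c) :
    0 < ∫ t in Ι x₀ x, (g t * v t - σ t * z t) := by
  set G := ∫ t in Ι x₀ x, g t
  set S := ∫ t in Ι x₀ x, |σ t|
  obtain ⟨ξ, hξ, hξmax⟩ := isCompact_uIcc.exists_isMaxOn nonempty_uIcc hz.abs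
  set N := |z ξ| with hNdef
  have hN : ∀ t ∈ uIcc x₀ x, |z t| ≤ N := fun t ht => hξmax ht
  have hJ : Ι x₀ x ⊆ uIcc x₀ x := uIoc_subset_uIcc
  have hgv : IntegrableOn (fun t => g t * v t) (Ι x₀ x) := (hg.mul_continuousOn hv).def'
  have hσz : IntegrableOn (fun t => σ t * z t) (Ι x₀ x) := (hσ.mul_continuousOn hz).def'
  have hS0 : 0 ≤ S := setIntegral_nonneg measurableSet_uIoc fun t _ => abs_nonneg _
  -- The integral equation at the maximum point `ξ` bounds `N` by itself; `S ≤ 1/2` absorbs it.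
  have hNle : N ≤ M * G + N * S := by
    have hfi := (hgv.sub hσz).abs
    calc N = |∫ t in x₀..ξ, (g t * v t - σ t * z t)| := by rw [hNdef, hz_eq ξ hξ]
      _ ≤ ∫ t in Ι x₀ ξ, |g t * v t - σ t * z t| := abs_integral_le_integral_abs_uIoc _
      _ ≤ ∫ t in Ι x₀ x, |g t * v t - σ t * z t| :=
          setIntegral_mono_set hfi (ae_of_all _ fun t => abs_nonneg _)
            (uIoc_subset_uIoc_of_uIcc_subset_uIcc
              (uIcc_subset_uIcc left_mem_uIcc hξ)).eventuallyLE
      _ ≤ ∫ t in Ι x₀ x, (g t * M + |σ t| * N) := by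
          refine setIntegral_mono_ae_restrict hfi
            ((hg.def'.mul_const M).add (hσ.def'.abs.mul_const N)) ?_
          filter_upwards [hg0, ae_restrict_mem measurableSet_uIoc] with t hgt ht
          calc |g t * v t - σ t * z t| ≤ g t * |v t| + |σ t| * |z t| :=
                (abs_sub _ _).trans_eq (by rw [abs_mul, abs_mul, abs_of_nonneg hgt])
            _ ≤ g t * M + |σ t| * N :=
                add_le_add (mul_le_mul_of_nonneg_left (hvM t (hJ ht)) hgt)
                  (mul_le_mul_of_nonneg_left (hN t (hJ ht)) (abs_nonneg _))
      _ = M * G + N * S := by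
          rw [integral_add (hg.def'.mul_const M) (hσ.def'.abs.mul_const N),
            MeasureTheory.integral_mul_const, MeasureTheory.integral_mul_const]
          ring
  have hN2 : N ≤ 2 * M * G := by nlinarith [mul_nonneg (abs_nonneg (z ξ)) (sub_nonneg.2 hS)]
  have hmain : c * G ≤ ∫ t in Ι x₀ x, g t * v t := by
    rw [← MeasureTheory.integral_const_mul]
    refine setIntegral_mono_ae_restrict (hg.def'.const_mul c) hgv ?_
    filter_upwards [hg0, ae_restrict_mem measurableSet_uIoc] with t hgt ht
    rw [mul_comm c]
    exact mul_le_mul_of_nonneg_left (hcv t (hJ ht)) hgt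
  have hpert : |∫ t in Ι x₀ x, σ t * z t| ≤ N * S :=
    calc |∫ t in Ι x₀ x, σ t * z t| ≤ ∫ t in Ι x₀ x, |σ t * z t| :=
          abs_integral_le_integral_abs
      _ ≤ ∫ t in Ι x₀ x, |σ t| * N :=
          setIntegral_mono_on hσz.abs (hσ.def'.abs.mul_const N) measurableSet_uIoc fun t ht => by
            rw [abs_mul]; exact mul_le_mul_of_nonneg_left (hN t (hJ ht)) (abs_nonneg _)
      _ = N * S := by rw [MeasureTheory.integral_mul_const]; ring
  rw [integral_sub hgv hσz]
  nlinarith [(abs_le.1 hpert).2, mul_le_mul_of_nonneg_right hN2 hS0, mul_pos hG (sub_pos.2 hSc)]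

end SignChange

section Zeros

variable {f : ℝ → ℝ}

lemma IsPreconnected.pos_mul_of_ne_zero {s : Set ℝ} (hs : IsPreconnected s)
    (hf : ContinuousOn f s) (h0 : ∀ x ∈ s, f x ≠ 0) {x y : ℝ} (hx : x ∈ s) (hy : y ∈ s) :
    0 < f x * f y := by
  by_contra! hle
  obtain ⟨z, hz, hz0⟩ : (0 : ℝ) ∈ f '' s := by
    rcases mul_nonpos_iff.1 hle with ⟨hfx, hfy⟩ | ⟨hfx, hfy⟩
    · exact hs.intermediate_value hy hx hf ⟨hfy, hfx⟩
    · exact hs.intermediate_value hx hy hf ⟨hfx, hfy⟩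
  exact h0 z hz hz0

lemma exists_first_zero {x₁ x₂ δ : ℝ} (hf : ContinuousOn f (Icc x₁ x₂)) (h12 : x₁ < x₂)
    (h₂ : f x₂ = 0) (hδ : 0 < δ) (hiso : ∀ x ∈ Ioo x₁ x₂, x < x₁ + δ → f x ≠ 0) :
    ∃ z ∈ Ioc x₁ x₂, f z = 0 ∧ ∀ x ∈ Ioo x₁ z, f x ≠ 0 := by
  set l := min (x₁ + δ / 2) x₂
  have hl : x₁ < l := lt_min (by linarith) h12
  have hK : IsCompact (Icc l x₂ ∩ f ⁻¹' {0}) :=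
    isCompact_Icc.of_isClosed_subset
      ((hf.mono (Icc_subset_Icc_left hl.le)).preimage_isClosed_of_isClosed isClosed_Icc
        isClosed_singleton) inter_subset_left
  obtain ⟨z, ⟨hzI, hz0⟩, hzmin⟩ := hK.exists_isLeast ⟨x₂, ⟨min_le_right _ _, le_rfl⟩, h₂⟩
  refine ⟨z, ⟨hl.trans_le hzI.1, hzI.2⟩, hz0, fun x hx hfx => ?_⟩
  rcases lt_or_ge x l with hxl | hxl
  · exact hiso x ⟨hx.1, hxl.trans_le (min_le_right _ _)⟩
      (hxl.trans_le (min_le_left _ _) |>.trans (by linarith)) hfx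
  · exact (hzmin ⟨⟨hxl, hx.2.le.trans hzI.2⟩, hfx⟩).not_gt hx.2

end Zeros

namespace SLRSolution

variable {a b lam lamD k x₀ x x₁ x₂ : ℝ} {p q r s y y1 Y Y1 : ℝ → ℝ}

lemma const_mul (hsol : SLRSolution a b lam p q r s y y1) (c : ℝ) :
    SLRSolution a b lam p q r s (fun x => c * y x) (fun x => c * y1 x) := by
  obtain ⟨hy, hy1, h⟩ := hsol
  refine ⟨continuousOn_const.mul hy, continuousOn_const.mul hy1, fun x hx => ⟨?_, ?_⟩⟩
  · calc c * y x = c * y a + ∫ t in a..x, c * (1 / p t * y1 t - s t * y t) := by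
          rw [intervalIntegral.integral_const_mul, (h x hx).1]; ring
      _ = _ := by congr 1; exact integral_congr fun t _ => by ring
  · calc c * y1 x
          = c * y1 a + ∫ t in a..x, c * (s t * y1 t + (q t - lam * r t) * y t) := by
          rw [intervalIntegral.integral_const_mul, (h x hx).2]; ring
      _ = _ := by congr 1; exact integral_congr fun t _ => by ring

lemma intervalIntegrable_rhs₁ (hsol : SLRSolution a b lam p q r s y y1) (hab : a ≤ b)
    (hp : IntegrableOn (fun x => 1 / p x) (Ioo a b)) (hs : IntegrableOn s (Ioo a b)) :
    IntervalIntegrable (fun t => 1 / p t * y1 t - s t * y t) volume a b :=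
  (hp.intervalIntegrable_mul_continuousOn hab hsol.2.1).sub
    (hs.intervalIntegrable_mul_continuousOn hab hsol.1)

lemma intervalIntegrable_rhs₂ (hsol : SLRSolution a b lam p q r s y y1) (hab : a ≤ b)
    (hq : IntegrableOn q (Ioo a b)) (hr : IntegrableOn r (Ioo a b))
    (hs : IntegrableOn s (Ioo a b)) :
    IntervalIntegrable (fun t => s t * y1 t + (q t - lam * r t) * y t) volume a b :=
  (hs.intervalIntegrable_mul_continuousOn hab hsol.2.1).add
    ((hq.sub (hr.const_mul lam)).intervalIntegrable_mul_continuousOn hab hsol.1)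

lemma eq_zero_of_eq_zero (hsol : SLRSolution a b lam p q r s y y1)
    (hp : IntegrableOn (fun x => 1 / p x) (Ioo a b)) (hq : IntegrableOn q (Ioo a b))
    (hr : IntegrableOn r (Ioo a b)) (hs : IntegrableOn s (Ioo a b))
    {x₀ : ℝ} (hx₀ : x₀ ∈ Icc a b) (h0 : y x₀ = 0) (h1 : y1 x₀ = 0) :
    ∀ x ∈ Icc a b, y x = 0 := by
  have hab : a ≤ b := hx₀.1.trans hx₀.2
  set f := fun t => 1 / p t * y1 t - s t * y t
  set g := fun t => s t * y1 t + (q t - lam * r t) * y t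
  set K := fun t => |1 / p t| + |s t| + |q t - lam * r t| with hKdef
  set u := fun x => |y x| + |y1 x| with hudef
  have hf : IntervalIntegrable f volume a b := hsol.intervalIntegrable_rhs₁ hab hp hs
  have hg : IntervalIntegrable g volume a b := hsol.intervalIntegrable_rhs₂ hab hq hr hs
  have hK : IntervalIntegrable K volume a b :=
    (intervalIntegrable_iff_integrableOn_Ioo_of_le hab).2
      ((hp.norm.add hs.norm).add (hq.sub (hr.const_mul lam)).norm)
  have hu : ContinuousOn u (Icc a b) := hsol.1.abs.add hsol.2.1.abs
  have hfg : ∀ t, |f t| + |g t| ≤ K t * u t := fun t =>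
    calc |f t| + |g t|
        ≤ (|1 / p t| * |y1 t| + |s t| * |y t|) + (|s t| * |y1 t| + |q t - lam * r t| * |y t|) :=
          add_le_add ((abs_sub _ _).trans_eq (by rw [abs_mul, abs_mul]))
            ((abs_add_le _ _).trans_eq (by rw [abs_mul, abs_mul]))
      _ ≤ K t * u t := by
          nlinarith [mul_nonneg (abs_nonneg (1 / p t)) (abs_nonneg (y t)),
            mul_nonneg (abs_nonneg (q t - lam * r t)) (abs_nonneg (y1 t))]
  have hle : ∀ c ∈ Icc a b, ∀ x ∈ Icc a b, u x ≤ u c + ∫ t in Ι c x, K t * u t := by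
    intro c hc x hx
    have hfi := (hf.mono_Icc hc hx).def'
    have hgi := (hg.mono_Icc hc hx).def'
    have e1 : |y x| ≤ |y c| + ∫ t in Ι c x, |f t| := by
      rw [eq_add_integral_of_mem hf (fun z hz => (hsol.2.2 z hz).1) hc hx]
      exact (abs_add_le _ _).trans (add_le_add le_rfl (abs_integral_le_integral_abs_uIoc _))
    have e2 : |y1 x| ≤ |y1 c| + ∫ t in Ι c x, |g t| := by
      rw [eq_add_integral_of_mem hg (fun z hz => (hsol.2.2 z hz).2) hc hx]
      exact (abs_add_le _ _).trans (add_le_add le_rfl (abs_integral_le_integral_abs_uIoc _))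
    have e3 : (∫ t in Ι c x, |f t|) + ∫ t in Ι c x, |g t| ≤ ∫ t in Ι c x, K t * u t := by
      rw [← integral_add hfi.abs hgi.abs]
      exact setIntegral_mono_on (hfi.abs.add hgi.abs)
        ((hK.mul_continuousOn (by rwa [uIcc_of_le hab])).mono_Icc hc hx).def'
        measurableSet_uIoc fun t _ => hfg t
    simp only [hudef]
    linarith
  intro x hx
  have hux := eq_zero_of_le_integral hK (fun t => by positivity) hu (fun x _ => by positivity)
    hle hx₀ (by simp [hudef, h0, h1]) x hx
  simp only [hudef] at hux
  exact abs_eq_zero.1 (by linarith [abs_nonneg (y x), abs_nonneg (y1 x)])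

lemma sign_change_of_pos (hsol : SLRSolution a b lam p q r s y y1)
    (hp : IntegrableOn (fun x => 1 / p x) (Ioo a b)) (hs : IntegrableOn s (Ioo a b))
    (hppos : ∀ᵐ x ∂(volume.restrict (Ioo a b)), 0 < p x)
    (hx₀ : x₀ ∈ Icc a b) (h0 : y x₀ = 0) (h1 : 0 < y1 x₀) :
    ∃ δ > 0, ∀ x ∈ Icc a b, x ≠ x₀ → |x - x₀| < δ → 0 < (x - x₀) * y x := by
  have hab : a ≤ b := hx₀.1.trans hx₀.2
  have hpi : IntervalIntegrable (fun x => 1 / p x) volume a b :=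
    (intervalIntegrable_iff_integrableOn_Ioo_of_le hab).2 hp
  have hsi : IntervalIntegrable s volume a b :=
    (intervalIntegrable_iff_integrableOn_Ioo_of_le hab).2 hs
  have hf := hsol.intervalIntegrable_rhs₁ hab hp hs
  have hS : ContinuousWithinAt (fun x => ∫ t in x₀..x, |s t|) (Icc a b) x₀ := by
    have := continuousOn_primitive_interval' hsi.abs (Icc_subset_uIcc hx₀)
    rw [uIcc_of_le hab] at this
    exact this x₀ hx₀
  -- Near `x₀`, `y1` lies in `(c, 3c)` with `c = y1 x₀ / 2`, so the smallness condition
  -- `2 · 3c · ∫|s| < c` of `integral_uIoc_pos_of_perturbation` reads `∫|s| < 1/6`.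
  have hev : ∀ᶠ t in 𝓝[Icc a b] x₀,
      y1 t ∈ Metric.ball (y1 x₀) (y1 x₀ / 2) ∧ ∫ u in x₀..t, |s u| ∈ Metric.ball 0 (1 / 6) := by
    refine ((hsol.2.1 x₀ hx₀).eventually_mem (Metric.ball_mem_nhds _ (half_pos h1))).and ?_
    simpa using hS.eventually_mem (Metric.ball_mem_nhds _ (by norm_num : (0 : ℝ) < 1 / 6))
  obtain ⟨δ, hδ, hδev⟩ := Metric.eventually_nhds_iff.1 (eventually_nhdsWithin_iff.1 hev)
  refine ⟨δ, hδ, fun x hx hne hxδ => ?_⟩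
  have hsub : uIcc x₀ x ⊆ Icc a b := ordConnected_Icc.uIcc_subset hx₀ hx
  have hnear : ∀ t ∈ uIcc x₀ x, |y1 t - y1 x₀| < y1 x₀ / 2 := fun t ht => by
    have := (hδev ((Real.dist_eq t x₀).trans_lt ((abs_sub_left_of_mem_uIcc ht).trans_lt hxδ))
      (hsub ht)).1
    rwa [Metric.mem_ball, Real.dist_eq] at this
  have hSx : ∫ u in Ι x₀ x, |s u| < 1 / 6 := by
    have := (hδev ((Real.dist_eq x x₀).trans_lt hxδ) hx).2
    rwa [Metric.mem_ball, dist_zero_right, Real.norm_eq_abs, abs_integral_eq_abs_integral_uIoc,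
      abs_of_nonneg (setIntegral_nonneg measurableSet_uIoc fun u _ => abs_nonneg (s u))] at this
  have hpos_p := ae_restrict_uIoc_of_ae_restrict_Ioo hppos hx₀ hx
  have hI : 0 < ∫ t in Ι x₀ x, (1 / p t * y1 t - s t * y t) :=
    integral_uIoc_pos_of_perturbation (hpi.mono_Icc hx₀ hx) (hsi.mono_Icc hx₀ hx)
      (hsol.2.1.mono hsub) (hsol.1.mono hsub)
      (fun w hw => by
        rw [eq_add_integral_of_mem hf (fun z hz => (hsol.2.2 z hz).1) hx₀ (hsub hw), h0,
          zero_add])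
      (hpos_p.mono fun t ht => (one_div_pos.2 ht).le)
      (integral_uIoc_pos_of_ae_pos hne.symm (hpi.mono_Icc hx₀ hx)
        (hpos_p.mono fun t ht => one_div_pos.2 ht))
      (c := y1 x₀ / 2) (M := 3 * y1 x₀ / 2)
      (fun t ht => by linarith [(abs_lt.1 (hnear t ht)).1])
      (fun t ht => abs_le.2 ⟨by linarith [(abs_lt.1 (hnear t ht)).1],
        by linarith [(abs_lt.1 (hnear t ht)).2]⟩)
      (by linarith) (by nlinarith)
  rw [eq_add_integral_of_mem hf (fun z hz => (hsol.2.2 z hz).1) hx₀ hx, h0, zero_add]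
  exact mul_integral_pos_of_integral_uIoc_pos hne.symm hI

lemma sign_change (hsol : SLRSolution a b lam p q r s y y1)
    (hp : IntegrableOn (fun x => 1 / p x) (Ioo a b)) (hs : IntegrableOn s (Ioo a b))
    (hppos : ∀ᵐ x ∂(volume.restrict (Ioo a b)), 0 < p x)
    (hx₀ : x₀ ∈ Icc a b) (h0 : y x₀ = 0) (h1 : y1 x₀ ≠ 0) :
    ∃ δ > 0, ∀ x ∈ Icc a b, x ≠ x₀ → |x - x₀| < δ → 0 < (x - x₀) * y x * y1 x₀ := by
  obtain ⟨δ, hδ, h⟩ := (hsol.const_mul (y1 x₀)).sign_change_of_pos hp hs hppos hx₀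
    (by simp [h0]) (mul_self_pos.2 h1)
  exact ⟨δ, hδ, fun x hx hne hxδ => by linarith [h x hx hne hxδ]⟩

lemma mul_deriv_nonneg_of_pos (hsol : SLRSolution a b lam p q r s y y1)
    (hp : IntegrableOn (fun x => 1 / p x) (Ioo a b)) (hs : IntegrableOn s (Ioo a b))
    (hppos : ∀ᵐ x ∂(volume.restrict (Ioo a b)), 0 < p x)
    (hx₀ : x₀ ∈ Icc a b) (hx : x ∈ Icc a b) (h0 : y x₀ = 0)
    (hpos : ∀ t ∈ uIoo x₀ x, 0 < y t) :
    0 ≤ (x - x₀) * y1 x₀ := by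
  by_contra! hneg
  have hne : x ≠ x₀ := by rintro rfl; simp at hneg
  have h1 : y1 x₀ ≠ 0 := by rintro h; simp [h] at hneg
  obtain ⟨δ, hδ, hsc⟩ := hsol.sign_change hp hs hppos hx₀ h0 h1
  have hd : 0 < |x - x₀| := abs_pos.2 (sub_ne_zero.2 hne)
  set ε := min (1 / 2) (δ / (2 * |x - x₀|))
  have hε : 0 < ε := lt_min (by norm_num) (by positivity)
  have hε1 : ε ≤ 1 / 2 := min_le_left _ _
  have hεδ : ε * |x - x₀| < δ :=
    calc ε * |x - x₀| ≤ δ / (2 * |x - x₀|) * |x - x₀| := by gcongr; exact min_le_right _ _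
      _ < δ := by field_simp; linarith
  set t := x₀ + ε * (x - x₀)
  have ht : t ∈ uIoo x₀ x := by
    rcases hne.lt_or_gt with h | h
    · exact mem_uIoo_of_gt (by nlinarith) (by nlinarith)
    · exact mem_uIoo_of_lt (by nlinarith) (by nlinarith)
  have htab : t ∈ Icc a b :=
    (uIoo_subset_uIcc_self.trans (ordConnected_Icc.uIcc_subset hx₀ hx)) ht
  have hsign := hsc t htab (by simp [t, hε.ne', sub_ne_zero.2 hne])
    (by simpa [t, abs_mul, abs_of_pos hε] using hεδ)
  have : (t - x₀) * y t * y1 x₀ = ε * y t * ((x - x₀) * y1 x₀) := by ring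
  nlinarith [mul_pos hε (hpos t ht)]

lemma wronskian_sub (hy : SLRSolution a b lam p q r s y y1)
    (hY : SLRSolution a b lamD p q r s Y Y1)
    (hp : IntegrableOn (fun x => 1 / p x) (Ioo a b)) (hq : IntegrableOn q (Ioo a b))
    (hr : IntegrableOn r (Ioo a b)) (hs : IntegrableOn s (Ioo a b))
    (hx₁ : x₁ ∈ Icc a b) (hx₂ : x₂ ∈ Icc a b) :
    (y x₂ * Y1 x₂ - Y x₂ * y1 x₂) - (y x₁ * Y1 x₁ - Y x₁ * y1 x₁)
      = (lam - lamD) * ∫ t in x₁..x₂, r t * (y t * Y t) := by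
  have hab : a ≤ b := hx₁.1.trans hx₁.2
  have hfy := hy.intervalIntegrable_rhs₁ hab hp hs
  have hgy := hy.intervalIntegrable_rhs₂ hab hq hr hs
  have hfY := hY.intervalIntegrable_rhs₁ hab hp hs
  have hgY := hY.intervalIntegrable_rhs₂ hab hq hr hs
  have hc : ∀ {h : ℝ → ℝ}, ContinuousOn h (Icc a b) → ContinuousOn h (uIcc a b) := fun h => by
    rwa [uIcc_of_le hab]
  have hA := ((hfy.mul_continuousOn (hc hY.2.1)).add (hgY.continuousOn_mul (hc hy.1))).mono_Icc
    hx₁ hx₂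
  have hB := ((hfY.mul_continuousOn (hc hy.2.1)).add (hgy.continuousOn_mul (hc hY.1))).mono_Icc
    hx₁ hx₂
  rw [mul_eq_add_integral hfy hgY (fun z hz => (hy.2.2 z hz).1) (fun z hz => (hY.2.2 z hz).2)
      hx₁ hx₂,
    mul_eq_add_integral hfY hgy (fun z hz => (hY.2.2 z hz).1) (fun z hz => (hy.2.2 z hz).2)
      hx₁ hx₂]
  have key : (∫ t in x₁..x₂, ((1 / p t * y1 t - s t * y t) * Y1 t
        + y t * (s t * Y1 t + (q t - lamD * r t) * Y t)))
      - (∫ t in x₁..x₂, ((1 / p t * Y1 t - s t * Y t) * y1 t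
        + Y t * (s t * y1 t + (q t - lam * r t) * y t)))
      = (lam - lamD) * ∫ t in x₁..x₂, r t * (y t * Y t) := by
    rw [← intervalIntegral.integral_sub hA hB, ← intervalIntegral.integral_const_mul]
    exact integral_congr fun t _ => by ring
  linarith

theorem sturm_comparison (hy : SLRSolution a b lam p q r s y y1)
    (hY : SLRSolution a b lamD p q r s Y Y1) (hlt : lam < lamD)
    (hp : IntegrableOn (fun x => 1 / p x) (Ioo a b)) (hq : IntegrableOn q (Ioo a b))
    (hr : IntegrableOn r (Ioo a b)) (hs : IntegrableOn s (Ioo a b))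
    (hppos : ∀ᵐ x ∂(volume.restrict (Ioo a b)), 0 < p x)
    (hrpos : ∀ᵐ x ∂(volume.restrict (Ioo a b)), 0 < r x)
    (hx₁ : x₁ ∈ Icc a b) (hx₂ : x₂ ∈ Icc a b) (h12 : x₁ < x₂)
    (hy₁ : y x₁ = 0) (hy₂ : y x₂ = 0) (hypos : ∀ t ∈ Ioo x₁ x₂, 0 < y t)
    (hYnn : ∀ t ∈ Icc x₁ x₂, 0 ≤ Y t) : ∃ t ∈ Ioo x₁ x₂, Y t = 0 := by
  by_contra! hY0
  have hYpos : ∀ t ∈ Ioo x₁ x₂, 0 < Y t := fun t ht =>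
    (hYnn t (Ioo_subset_Icc_self ht)).lt_of_ne (hY0 t ht).symm
  have hd₁ : 0 ≤ y1 x₁ := by
    have := hy.mul_deriv_nonneg_of_pos hp hs hppos hx₁ hx₂ hy₁ (by rwa [uIoo_of_lt h12])
    nlinarith
  have hd₂ : y1 x₂ ≤ 0 := by
    have := hy.mul_deriv_nonneg_of_pos hp hs hppos hx₂ hx₁ hy₂ (by rwa [uIoo_of_gt h12])
    nlinarith
  have hI : 0 < ∫ t in x₁..x₂, r t * (y t * Y t) := by
    rw [integral_of_le h12.le, ← uIoc_of_le h12.le]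
    refine integral_uIoc_pos_of_ae_pos h12.ne
      ((hr.intervalIntegrable_mul_continuousOn (hx₁.1.trans hx₁.2) (hy.1.mul hY.1)).mono_Icc
        hx₁ hx₂) ?_
    have hIoo : ∀ᵐ t ∂volume.restrict (Ι x₁ x₂), t ∈ Ioo x₁ x₂ := by
      rw [uIoc_of_le h12.le, ← Measure.restrict_congr_set Ioo_ae_eq_Ioc]
      exact ae_restrict_mem measurableSet_Ioo
    filter_upwards [ae_restrict_uIoc_of_ae_restrict_Ioo hrpos hx₁ hx₂, hIoo] with t hrt ht
    exact mul_pos hrt (mul_pos (hypos t ht) (hYpos t ht))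
  have hW := hy.wronskian_sub hY hp hq hr hs hx₁ hx₂
  rw [hy₁, hy₂] at hW
  nlinarith [mul_nonneg (hYnn x₁ (left_mem_Icc.2 h12.le)) hd₁,
    mul_nonneg (hYnn x₂ (right_mem_Icc.2 h12.le)) (neg_nonneg.2 hd₂),
    mul_neg_of_neg_of_pos (sub_neg.2 hlt) hI]

lemma deriv_ne_zero_of_eq_zero (hy : SLRSolution a b lam p q r s y y1)
    (hp : IntegrableOn (fun x => 1 / p x) (Ioo a b)) (hq : IntegrableOn q (Ioo a b))
    (hr : IntegrableOn r (Ioo a b)) (hs : IntegrableOn s (Ioo a b))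
    (hnt : ∃ x ∈ Icc a b, y x ≠ 0) (hx₀ : x₀ ∈ Icc a b) (h0 : y x₀ = 0) : y1 x₀ ≠ 0 :=
  fun h1 => let ⟨_, hw, hne⟩ := hnt; hne (hy.eq_zero_of_eq_zero hp hq hr hs hx₀ h0 h1 _ hw)

theorem eq_of_eq_zero_of_eq_zero (hy : SLRSolution a b lam p q r s y y1)
    (hY : SLRSolution a b lamD p q r s Y Y1) (hYnn : ∀ x ∈ Icc a b, 0 ≤ Y x)
    (hYne : ∀ x ∈ Ioo a b, Y x ≠ 0) (hlt : lam < lamD)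
    (hp : IntegrableOn (fun x => 1 / p x) (Ioo a b)) (hq : IntegrableOn q (Ioo a b))
    (hr : IntegrableOn r (Ioo a b)) (hs : IntegrableOn s (Ioo a b))
    (hppos : ∀ᵐ x ∂(volume.restrict (Ioo a b)), 0 < p x)
    (hrpos : ∀ᵐ x ∂(volume.restrict (Ioo a b)), 0 < r x)
    (hnt : ∃ x ∈ Icc a b, y x ≠ 0) (hx₁ : x₁ ∈ Icc a b) (hx₂ : x₂ ∈ Icc a b)
    (h₁ : y x₁ = 0) (h₂ : y x₂ = 0) : x₁ = x₂ := by
  wlog h12 : x₁ < x₂ generalizing x₁ x₂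
  · rcases (not_lt.1 h12).lt_or_eq with h | h
    · exact (this hx₂ hx₁ h₂ h₁ h).symm
    · exact h.symm
  exfalso
  obtain ⟨δ, hδ, hsc⟩ :=
    hy.sign_change hp hs hppos hx₁ h₁ (hy.deriv_ne_zero_of_eq_zero hp hq hr hs hnt hx₁ h₁)
  have hsub : Icc x₁ x₂ ⊆ Icc a b := Icc_subset_Icc hx₁.1 hx₂.2
  obtain ⟨z, hz, hz0, hzne⟩ := exists_first_zero (hy.1.mono hsub) h12 h₂ hδ
    fun x hx hxδ hyx => by
    have := hsc x (hsub (Ioo_subset_Icc_self hx)) hx.1.ne'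
      (by rw [abs_of_pos (sub_pos.2 hx.1)]; linarith)
    simp [hyx] at this
  have hzab : z ∈ Icc a b := hsub (Ioc_subset_Icc_self hz)
  have hIoo : Ioo x₁ z ⊆ Icc a b := Ioo_subset_Icc_self.trans (Icc_subset_Icc hx₁.1 hzab.2)
  obtain ⟨m, hm⟩ : (Ioo x₁ z).Nonempty := nonempty_Ioo.2 hz.1
  -- `y m * y` is the positive multiple of `y` on the arc `(x₁, z)`
  obtain ⟨t, ht, hYt⟩ := (hy.const_mul (y m)).sturm_comparison hY hlt hp hq hr hs hppos hrpos
    hx₁ hzab hz.1 (by simp [h₁]) (by simp [hz0])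
    (fun t ht => by
      simpa [mul_comm] using isPreconnected_Ioo.pos_mul_of_ne_zero (hy.1.mono hIoo) hzne ht hm)
    (fun t ht => hYnn t (Icc_subset_Icc hx₁.1 hzab.2 ht))
  exact hYne t ⟨hx₁.1.trans_lt ht.1, ht.2.trans_le hzab.2⟩ hYt

theorem ne_zero_of_apply_right_eq_mul (hy : SLRSolution a b lam p q r s y y1) (hab : a < b)
    (hp : IntegrableOn (fun x => 1 / p x) (Ioo a b)) (hq : IntegrableOn q (Ioo a b))
    (hr : IntegrableOn r (Ioo a b)) (hs : IntegrableOn s (Ioo a b))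
    (hppos : ∀ᵐ x ∂(volume.restrict (Ioo a b)), 0 < p x) (hnt : ∃ x ∈ Icc a b, y x ≠ 0)
    (huniq : ∀ x₁ ∈ Icc a b, ∀ x₂ ∈ Icc a b, y x₁ = 0 → y x₂ = 0 → x₁ = x₂)
    (hk : 0 < k) (hbc : y b = k * y a) : ∀ x ∈ Icc a b, y x ≠ 0 := by
  intro x₀ hx₀ h0
  have ha : y a ≠ 0 := fun ha => hab.ne
    (huniq a (left_mem_Icc.2 hab.le) b (right_mem_Icc.2 hab.le) ha (by rw [hbc, ha, mul_zero]))
  have hb : y b ≠ 0 := by rw [hbc]; exact mul_ne_zero hk.ne' ha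
  have hax : a < x₀ := hx₀.1.lt_of_ne (by rintro rfl; exact ha h0)
  have hxb : x₀ < b := hx₀.2.lt_of_ne (by rintro rfl; exact hb h0)
  have hne : ∀ x ∈ Icc a b, x ≠ x₀ → y x ≠ 0 := fun x hx hx' h => hx' (huniq x hx x₀ hx₀ h h0)
  obtain ⟨δ, hδ, hsc⟩ :=
    hy.sign_change hp hs hppos hx₀ h0 (hy.deriv_ne_zero_of_eq_zero hp hq hr hs hnt hx₀ h0)
  have hδa := lt_min hδ (sub_pos.2 hax)
  have hδb := lt_min hδ (sub_pos.2 hxb)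
  obtain ⟨xl, hl₁, hl₂, hlδ⟩ : ∃ xl, a < xl ∧ xl < x₀ ∧ x₀ - xl < δ :=
    ⟨x₀ - min δ (x₀ - a) / 2, by linarith [min_le_right δ (x₀ - a)], by linarith,
      by linarith [min_le_left δ (x₀ - a)]⟩
  obtain ⟨xr, hr₁, hr₂, hrδ⟩ : ∃ xr, x₀ < xr ∧ xr < b ∧ xr - x₀ < δ :=
    ⟨x₀ + min δ (b - x₀) / 2, by linarith, by linarith [min_le_right δ (b - x₀)],
      by linarith [min_le_left δ (b - x₀)]⟩
  have hL := hsc xl ⟨hl₁.le, (hl₂.trans hxb).le⟩ hl₂.ne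
    (by rw [abs_of_neg (sub_neg.2 hl₂)]; linarith)
  have hR := hsc xr ⟨(hax.trans hr₁).le, hr₂.le⟩ hr₁.ne'
    (by rw [abs_of_pos (sub_pos.2 hr₁)]; linarith)
  have hAL : 0 < y a * y xl := isPreconnected_Icc.pos_mul_of_ne_zero
    (hy.1.mono (Icc_subset_Icc le_rfl (hl₂.trans hxb).le))
    (fun x hx => hne x ⟨hx.1, hx.2.trans (hl₂.trans hxb).le⟩ (hx.2.trans_lt hl₂).ne)
    (left_mem_Icc.2 hl₁.le) (right_mem_Icc.2 hl₁.le)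
  have hRB : 0 < y xr * y b := isPreconnected_Icc.pos_mul_of_ne_zero
    (hy.1.mono (Icc_subset_Icc (hax.trans hr₁).le le_rfl))
    (fun x hx => hne x ⟨(hax.trans hr₁).le.trans hx.1, hx.2⟩ (hr₁.trans_le hx.1).ne')
    (left_mem_Icc.2 hr₂.le) (right_mem_Icc.2 hr₂.le)
  have hLd : y xl * y1 x₀ < 0 := by nlinarith
  have hRd : 0 < y xr * y1 x₀ := by nlinarith
  have hLR : y xl * y xr < 0 := by nlinarith [mul_neg_of_neg_of_pos hLd hRd, sq_nonneg (y1 x₀)]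
  have := mul_pos hAL hRB
  rw [hbc] at this
  nlinarith [mul_pos hk (mul_self_pos.2 ha)]

end SLRSolution

theorem stmt19_general (a b : ℝ) (hab : a < b) (p q r s : ℝ → ℝ)
    (hp : IntegrableOn (fun x => 1 / p x) (Set.Ioo a b))
    (hq : IntegrableOn q (Set.Ioo a b))
    (hr : IntegrableOn r (Set.Ioo a b))
    (hs : IntegrableOn s (Set.Ioo a b))
    (hppos : ∀ᵐ x ∂(volume.restrict (Set.Ioo a b)), 0 < p x)
    (hrpos : ∀ᵐ x ∂(volume.restrict (Set.Ioo a b)), 0 < r x)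
    (lamD : ℝ) (Ψ Ψ1 : ℝ → ℝ)
    (hΨsol : SLRSolution a b lamD p q r s Ψ Ψ1)
    (hΨbc : Ψ a = 0 ∧ Ψ b = 0)
    (hΨpos : ∀ x ∈ Set.Ioo a b, Ψ x ≠ 0)
    (k11 k21 k22 : ℝ) (hk11 : 0 < k11)
    (lam₀ : ℝ) (hlt : lam₀ < lamD)
    (ψ ψ1 : ℝ → ℝ)
    (hψsol : SLRSolution a b lam₀ p q r s ψ ψ1)
    (hψbc : ψ b = k11 * ψ a ∧ ψ1 b = k21 * ψ a + k22 * ψ1 a)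
    (hψnt : ∃ x ∈ Set.Icc a b, ψ x ≠ 0) :
    ∀ x ∈ Set.Icc a b, ψ x ≠ 0 := by
  obtain ⟨m, hm⟩ : (Ioo a b).Nonempty := nonempty_Ioo.2 hab
  have hsign : ∀ x ∈ Ioo a b, 0 < Ψ m * Ψ x := fun x hx =>
    isPreconnected_Ioo.pos_mul_of_ne_zero (hΨsol.1.mono Ioo_subset_Icc_self) hΨpos hm hx
  have hYnn : ∀ x ∈ Icc a b, 0 ≤ Ψ m * Ψ x := fun x hx => by
    rcases eq_endpoints_or_mem_Ioo_of_mem_Icc hx with rfl | rfl | hx'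
    · simp [hΨbc.1]
    · simp [hΨbc.2]
    · exact (hsign x hx').le
  have huniq : ∀ x₁ ∈ Icc a b, ∀ x₂ ∈ Icc a b, ψ x₁ = 0 → ψ x₂ = 0 → x₁ = x₂ :=
    fun _ hx₁ _ hx₂ => hψsol.eq_of_eq_zero_of_eq_zero (hΨsol.const_mul (Ψ m)) hYnn
      (fun x hx => (hsign x hx).ne') hlt hp hq hr hs hppos hrpos hψnt hx₁ hx₂
  exact hψsol.ne_zero_of_apply_right_eq_mul hab hp hq hr hs hppos hψnt huniq hk11 hψbc.1

/-- If the first Dirichlet eigenfunction `Ψ` (with eigenvalue `lamD`) has no zeros in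
`(a,b)` and `ψ` is a real eigenfunction of the coupled condition
`y(b) = k₁₁ y(a)`, `y¹(b) = k₂₁ y(a) + k₂₂ y¹(a)` with `k₁₁ > 0` (and `k₁₁k₂₂ = 1`),
for an eigenvalue `lam₀ < lamD`, then `ψ` has no zeros in `[a,b]`. -/
theorem stmt19 (a b : ℝ) (hab : a < b) (p q r s : ℝ → ℝ)
    (hp : IntegrableOn (fun x => 1 / p x) (Set.Ioo a b))
    (hq : IntegrableOn q (Set.Ioo a b))
    (hr : IntegrableOn r (Set.Ioo a b))
    (hs : IntegrableOn s (Set.Ioo a b))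
    (hppos : ∀ᵐ x ∂(volume.restrict (Set.Ioo a b)), 0 < p x)
    (hrpos : ∀ᵐ x ∂(volume.restrict (Set.Ioo a b)), 0 < r x)
    (lamD : ℝ) (Ψ Ψ1 : ℝ → ℝ)
    (hΨsol : SLRSolution a b lamD p q r s Ψ Ψ1)
    (hΨbc : Ψ a = 0 ∧ Ψ b = 0)
    (hΨnt : ∃ x ∈ Set.Icc a b, Ψ x ≠ 0)
    (hΨpos : ∀ x ∈ Set.Ioo a b, Ψ x ≠ 0)
    (k11 k21 k22 : ℝ) (hk11 : 0 < k11) (hdetK : k11 * k22 = 1)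
    (lam₀ : ℝ) (hlt : lam₀ < lamD)
    (ψ ψ1 : ℝ → ℝ)
    (hψsol : SLRSolution a b lam₀ p q r s ψ ψ1)
    (hψbc : ψ b = k11 * ψ a ∧ ψ1 b = k21 * ψ a + k22 * ψ1 a)
    (hψnt : ∃ x ∈ Set.Icc a b, ψ x ≠ 0) :
    ∀ x ∈ Set.Icc a b, ψ x ≠ 0 :=
  stmt19_general a b hab p q r s hp hq hr hs hppos hrpos lamD Ψ Ψ1 hΨsol hΨbc hΨpos k11 k21 k22 hk11
    lam₀ hlt ψ ψ1 hψsol hψbc hψnt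
end
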